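/- arXiv:1307.0657 — 11 statements merged into one kernel-verified Lean document; each statement's English description precedes it below -/
import Mathlib

section
/- If f : (0,1) → ℝ satisfies |f(x) + (1-x)^α f(y/(1-x)) - f(y) - (1-y)^α f(x/(1-y))| ≤ ε for all (x,y) with x, y, x+y ∈ (0,1), and F : ℝ₊₊² → ℝ is defined by F(u,v) = (u+v)^α f(v/(u+v)), then |F(u+v, w) + F(u, v) - F(u+w, v) - F(u, w)| ≤ ε(u+v+w)^α for all u, v, w > 0. -/
/-!
Both sides scale like `s ^ α` under `(u, v, w) ↦ (s u, s v, s w)`. Normalising by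
`s = u + v + w` and putting `x = w / s`, `y = v / s`, one has `1 - x = (u + v) / s` and
`1 - y = (u + w) / s`, and the combination of the four values of `F` becomes exactly `s ^ α`
times the expression bounded by `ε` at `(x, y)`.
-/

noncomputable def cocycleDefect (α : ℝ) (f : ℝ → ℝ) (x y : ℝ) : ℝ :=
  f x + (1 - x) ^ α * f (y / (1 - x)) - f y - (1 - y) ^ α * f (x / (1 - y))

lemma div_rpow_mul_apply_div_div (α : ℝ) (f : ℝ → ℝ) {a s : ℝ} (ha : 0 < a) (hs : 0 < s)
    (b : ℝ) : (a / s) ^ α * f (b / s / (a / s)) = a ^ α / s ^ α * f (b / a) := by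
  rw [Real.div_rpow ha.le hs.le, div_div_div_cancel_right₀ hs.ne']

lemma homogeneous_combination_eq_rpow_mul_cocycleDefect (α : ℝ) (f : ℝ → ℝ) {u v w : ℝ}
    (hu : 0 < u) (hv : 0 < v) (hw : 0 < w) :
    (u + v + w) ^ α * f (w / (u + v + w)) + (u + v) ^ α * f (v / (u + v))
        - (u + w + v) ^ α * f (v / (u + w + v)) - (u + w) ^ α * f (w / (u + w)) =
      (u + v + w) ^ α * cocycleDefect α f (w / (u + v + w)) (v / (u + v + w)) := by
  set s := u + v + w
  have hs : 0 < s := by positivity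
  have h1x : 1 - w / s = (u + v) / s := by field_simp; ring
  have h1y : 1 - v / s = (u + w) / s := by field_simp; ring
  have hs' : u + w + v = s := by ring
  rw [cocycleDefect, h1x, h1y, div_rpow_mul_apply_div_div α f (by positivity) hs,
    div_rpow_mul_apply_div_div α f (by positivity) hs, hs']
  field_simp

theorem stmt_0_general (α ε : ℝ) (f : ℝ → ℝ) (F : ℝ → ℝ → ℝ)
    (hf : ∀ x y : ℝ, 0 < x → 0 < y → x + y < 1 →
      |f x + (1 - x) ^ α * f (y / (1 - x)) - f y - (1 - y) ^ α * f (x / (1 - y))| ≤ ε)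
    (hF : ∀ u v : ℝ, 0 < u → 0 < v → F u v = (u + v) ^ α * f (v / (u + v))) :
    ∀ u v w : ℝ, 0 < u → 0 < v → 0 < w →
      |F (u + v) w + F u v - F (u + w) v - F u w| ≤ ε * (u + v + w) ^ α := by
  intro u v w hu hv hw
  have hs : 0 < u + v + w := by positivity
  have hxy : w / (u + v + w) + v / (u + v + w) < 1 := by
    rw [← add_div, div_lt_one hs]
    linarith
  rw [hF _ _ (by positivity) hw, hF _ _ hu hv, hF _ _ (by positivity) hv, hF _ _ hu hw,
    homogeneous_combination_eq_rpow_mul_cocycleDefect α f hu hv hw, abs_mul,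
    abs_of_pos (Real.rpow_pos_of_pos hs α), mul_comm ε]
  exact mul_le_mul_of_nonneg_left (hf _ _ (by positivity) (by positivity) hxy)
    (Real.rpow_nonneg hs.le α)

theorem stmt_0 (α ε : ℝ) (hε : 0 ≤ ε) (f : ℝ → ℝ) (F : ℝ → ℝ → ℝ)
    (hf : ∀ x y : ℝ, 0 < x → 0 < y → x + y < 1 →
      |f x + (1 - x) ^ α * f (y / (1 - x)) - f y - (1 - y) ^ α * f (x / (1 - y))| ≤ ε)
    (hF : ∀ u v : ℝ, 0 < u → 0 < v → F u v = (u + v) ^ α * f (v / (u + v))) :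
    ∀ u v w : ℝ, 0 < u → 0 < v → 0 < w →
      |F (u + v) w + F u v - F (u + w) v - F u w| ≤ ε * (u + v + w) ^ α :=
  stmt_0_general α ε f F hf hF
end

section
/- Let α < 0 and suppose g : ℝ₊₊ → ℝ satisfies g(uv) = g(u)v^α + g(v) for all u, v > 0. Then there exists c ∈ ℝ such that g(u) = c(u^α - 1) for all u > 0; in fact c = g(2)/(2^α - 1). -/
/-- Comparing the functional equation at `u * v` and at `v * u`. -/
theorem mul_rpow_sub_one_comm_of_cocycle {α : ℝ} {g : ℝ → ℝ}
    (hg : ∀ u v : ℝ, 0 < u → 0 < v → g (u * v) = g u * v ^ α + g v)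
    {u v : ℝ} (hu : 0 < u) (hv : 0 < v) :
    g u * (v ^ α - 1) = g v * (u ^ α - 1) := by
  have h := hg u v hu hv
  rw [mul_comm u v, hg v u hv hu] at h
  linear_combination -h

theorem stmt_3 (α : ℝ) (hα : α < 0) (g : ℝ → ℝ)
    (hg : ∀ u v : ℝ, 0 < u → 0 < v → g (u * v) = g u * v ^ α + g v) :
    ∃ c : ℝ, c = g 2 / (2 ^ α - 1) ∧ ∀ u : ℝ, 0 < u → g u = c * (u ^ α - 1) := by
  have h2 : (2 : ℝ) ^ α - 1 ≠ 0 :=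
    sub_ne_zero.mpr (Real.rpow_lt_one_of_one_lt_of_neg one_lt_two hα).ne
  refine ⟨_, rfl, fun u hu => ?_⟩
  rw [div_mul_eq_mul_div, eq_div_iff h2]
  exact mul_rpow_sub_one_comm_of_cocycle hg hu two_pos
end

section
/- Let α < 0. Suppose g : ℝ₊₊ → ℝ and F : ℝ₊₊² → ℝ satisfy: F is α-homogeneous (F(tu,tv) = t^α F(u,v)), g(u) = F(u,1) - F(1,u), and |F(u,v) + g(v) - F(v,u) - g(u)| ≤ 3ε(u+v+1)^α for all u, v > 0. Then g(u) = lim_{t→0⁺} t^{-α}(g(tu) - g(t)) for every u > 0, and g satisfies the functional equation g(uv) = g(u)v^α + g(v) for all u, v > 0. -/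
/-!
Homogeneity of `F` rewrites the hypothesis at the pair `(t u, t)` as the approximate cocycle
identity `|t ^ α g(u) + g(t) - g(t u)| ≤ 3 ε (t u + t + 1) ^ α`. Multiplying by `t ^ (-α)`, the
error is `O(t ^ (-α))`, which vanishes as `t → 0⁺` because `α < 0`; this gives the limit formula.
The functional equation follows by computing the same limit for `u v` in two ways, splitting
`g(t u v) - g(t) = (g((t v) u) - g(t v)) + (g(t v) - g(t))`.
-/

open Filter Topology

lemma abs_rpow_mul_add_sub_le_of_homogeneous {α C : ℝ} {g : ℝ → ℝ} {F : ℝ → ℝ → ℝ}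
    (hhom : ∀ t u v : ℝ, 0 < t → 0 < u → 0 < v → F (t * u) (t * v) = t ^ α * F u v)
    (hg : ∀ u : ℝ, 0 < u → g u = F u 1 - F 1 u)
    (hb : ∀ u v : ℝ, 0 < u → 0 < v → |F u v + g v - F v u - g u| ≤ C * (u + v + 1) ^ α)
    {t u : ℝ} (ht : 0 < t) (hu : 0 < u) :
    |t ^ α * g u + g t - g (t * u)| ≤ C * (t * u + t + 1) ^ α := by
  have h := hb (t * u) t (mul_pos ht hu) ht
  have h₁ := hhom t u 1 ht hu one_pos
  have h₂ := hhom t 1 u ht one_pos hu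
  rw [mul_one] at h₁ h₂
  rw [h₁, h₂] at h
  rw [hg u hu]
  convert h using 2
  ring

lemma tendsto_rpow_neg_mul_rpow_nhdsGT_zero {α : ℝ} (hα : α < 0) (u : ℝ) :
    Tendsto (fun t : ℝ => t ^ (-α) * (t * u + t + 1) ^ α) (𝓝[>] 0) (𝓝 0) := by
  have hpow : Tendsto (fun t : ℝ => t ^ (-α)) (𝓝 0) (𝓝 0) := by
    simpa [Real.zero_rpow (neg_pos.2 hα).ne'] using
      (Real.continuousAt_rpow_const 0 (-α) (Or.inr (neg_pos.2 hα).le)).tendsto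
  have hbase : Tendsto (fun t : ℝ => (t * u + t + 1) ^ α) (𝓝 0) (𝓝 1) := by
    have hcont : ContinuousAt (fun t : ℝ => (t * u + t + 1) ^ α) 0 :=
      ContinuousAt.rpow_const (by fun_prop) (Or.inl (by simp))
    simpa using hcont.tendsto
  simpa using (hpow.mul hbase).mono_left nhdsWithin_le_nhds

lemma tendsto_rpow_neg_mul_sub_of_abs_le {α C a u : ℝ} {g : ℝ → ℝ} (hα : α < 0)
    (h : ∀ t : ℝ, 0 < t → |t ^ α * a + g t - g (t * u)| ≤ C * (t * u + t + 1) ^ α) :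
    Tendsto (fun t : ℝ => t ^ (-α) * (g (t * u) - g t)) (𝓝[>] 0) (𝓝 a) := by
  rw [← tendsto_sub_nhds_zero_iff]
  refine squeeze_zero_norm' ?_ (by simpa using
    (tendsto_rpow_neg_mul_rpow_nhdsGT_zero hα u).const_mul C)
  filter_upwards [self_mem_nhdsWithin] with t (ht : 0 < t)
  have hinv : t ^ (-α) * t ^ α = 1 := by rw [← Real.rpow_add ht]; simp
  have hpos : 0 ≤ t ^ (-α) := Real.rpow_nonneg ht.le _
  calc ‖t ^ (-α) * (g (t * u) - g t) - a‖
      = |t ^ (-α) * (t ^ α * a + g t - g (t * u))| := by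
        rw [Real.norm_eq_abs, abs_sub_comm]
        congr 1
        linear_combination (-a) * hinv
    _ = t ^ (-α) * |t ^ α * a + g t - g (t * u)| := by rw [abs_mul, abs_of_nonneg hpos]
    _ ≤ t ^ (-α) * (C * (t * u + t + 1) ^ α) := mul_le_mul_of_nonneg_left (h t ht) hpos
    _ = C * (t ^ (-α) * (t * u + t + 1) ^ α) := by ring

lemma tendsto_mul_const_nhdsGT_zero {v : ℝ} (hv : 0 < v) :
    Tendsto (fun t : ℝ => t * v) (𝓝[>] 0) (𝓝[>] 0) := by
  refine tendsto_nhdsWithin_of_tendsto_nhds_of_eventually_within _ ?_ ?_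
  · simpa using ((continuous_mul_const v).tendsto 0).mono_left nhdsWithin_le_nhds
  · filter_upwards [self_mem_nhdsWithin] with t (ht : 0 < t)
    exact mul_pos ht hv

lemma apply_mul_eq_of_tendsto_rpow_neg_mul_sub {α : ℝ} {g : ℝ → ℝ}
    (hlim : ∀ u : ℝ, 0 < u →
      Tendsto (fun t : ℝ => t ^ (-α) * (g (t * u) - g t)) (𝓝[>] 0) (𝓝 (g u)))
    {u v : ℝ} (hu : 0 < u) (hv : 0 < v) :
    g (u * v) = g u * v ^ α + g v := by
  have hsplit : Tendsto (fun t : ℝ =>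
      v ^ α * ((t * v) ^ (-α) * (g (t * v * u) - g (t * v))) + t ^ (-α) * (g (t * v) - g t))
      (𝓝[>] 0) (𝓝 (v ^ α * g u + g v)) :=
    (((hlim u hu).comp (tendsto_mul_const_nhdsGT_zero hv)).const_mul _).add (hlim v hv)
  have heq : ∀ᶠ t in 𝓝[>] (0 : ℝ),
      v ^ α * ((t * v) ^ (-α) * (g (t * v * u) - g (t * v))) + t ^ (-α) * (g (t * v) - g t)
        = t ^ (-α) * (g (t * (u * v)) - g t) := by
    filter_upwards [self_mem_nhdsWithin] with t (ht : 0 < t)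
    have hinv : v ^ α * v ^ (-α) = 1 := by rw [← Real.rpow_add hv]; simp
    rw [show t * v * u = t * (u * v) by ring, Real.mul_rpow ht.le hv.le]
    linear_combination (t ^ (-α) * (g (t * (u * v)) - g (t * v))) * hinv
  rw [tendsto_nhds_unique (hlim (u * v) (mul_pos hu hv)) (hsplit.congr' heq), mul_comm]

theorem stmt_4_general (α ε : ℝ) (hα : α < 0) (g : ℝ → ℝ) (F : ℝ → ℝ → ℝ)
    (hhom : ∀ t u v : ℝ, 0 < t → 0 < u → 0 < v → F (t * u) (t * v) = t ^ α * F u v)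
    (hg : ∀ u : ℝ, 0 < u → g u = F u 1 - F 1 u)
    (hb : ∀ u v : ℝ, 0 < u → 0 < v →
      |F u v + g v - F v u - g u| ≤ 3 * ε * (u + v + 1) ^ α) :
    (∀ u : ℝ, 0 < u →
      Filter.Tendsto (fun t : ℝ => t ^ (-α) * (g (t * u) - g t))
        (nhdsWithin 0 (Set.Ioi 0)) (nhds (g u))) ∧
    (∀ u v : ℝ, 0 < u → 0 < v → g (u * v) = g u * v ^ α + g v) := by
  have hlim : ∀ u : ℝ, 0 < u →
      Tendsto (fun t : ℝ => t ^ (-α) * (g (t * u) - g t)) (𝓝[>] 0) (𝓝 (g u)) :=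
    fun u hu => tendsto_rpow_neg_mul_sub_of_abs_le hα fun t ht =>
      abs_rpow_mul_add_sub_le_of_homogeneous hhom hg hb ht hu
  exact ⟨hlim, fun u v hu hv => apply_mul_eq_of_tendsto_rpow_neg_mul_sub hlim hu hv⟩

theorem stmt_4 (α ε : ℝ) (hα : α < 0) (hε : 0 ≤ ε) (g : ℝ → ℝ) (F : ℝ → ℝ → ℝ)
    (hhom : ∀ t u v : ℝ, 0 < t → 0 < u → 0 < v → F (t * u) (t * v) = t ^ α * F u v)
    (hg : ∀ u : ℝ, 0 < u → g u = F u 1 - F 1 u)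
    (hb : ∀ u v : ℝ, 0 < u → 0 < v →
      |F u v + g v - F v u - g u| ≤ 3 * ε * (u + v + 1) ^ α) :
    (∀ u : ℝ, 0 < u →
      Filter.Tendsto (fun t : ℝ => t ^ (-α) * (g (t * u) - g t))
        (nhdsWithin 0 (Set.Ioi 0)) (nhds (g u))) ∧
    (∀ u v : ℝ, 0 < u → 0 < v → g (u * v) = g u * v ^ α + g v) :=
  stmt_4_general α ε hα g F hhom hg hb
end

section
/- Suppose g : ℝ₊₊ → ℝ satisfies |g(tv) - g(v) - g(t)| ≤ 6ε for all t, v > 0. Then there exists a logarithmic function l : ℝ₊₊ → ℝ (i.e., l(xy) = l(x) + l(y) for all x, y > 0) such that |g(u) - l(u)| ≤ 6ε for all u > 0. -/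
/-!
Via `t = exp x` the hypothesis says that `f = g ∘ exp` is additive up to `6ε` on `ℝ`. By Hyers'
argument, `2⁻ⁿ f (2ⁿ x)` converges to an additive function within `6ε` of `f`: consecutive terms
differ by at most `6ε / 2ⁿ⁺¹`, and the additivity defect of the `n`-th term is at most `6ε / 2ⁿ`.
Composing the limit with `log` gives `l`.
-/

open Filter Topology

section Hyers

variable {G E : Type*} [AddCommMonoid G] [NormedAddCommGroup E] [NormedSpace ℝ E]
  {f : G → E} {δ : ℝ}

noncomputable def hyersSeq (f : G → E) (n : ℕ) (x : G) : E :=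
  ((2 : ℝ) ^ n)⁻¹ • f (2 ^ n • x)

lemma hyersSeq_zero (f : G → E) (x : G) : hyersSeq f 0 x = f x := by
  simp [hyersSeq]

variable (hf : ∀ x y, ‖f (x + y) - f x - f y‖ ≤ δ)
include hf

lemma norm_hyersSeq_add_sub_le (n : ℕ) (x y : G) :
    ‖hyersSeq f n (x + y) - hyersSeq f n x - hyersSeq f n y‖ ≤ δ / 2 ^ n := by
  have hdefect : hyersSeq f n (x + y) - hyersSeq f n x - hyersSeq f n y =
      ((2 : ℝ) ^ n)⁻¹ • (f (2 ^ n • x + 2 ^ n • y) - f (2 ^ n • x) - f (2 ^ n • y)) := by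
    simp only [hyersSeq, smul_add, smul_sub]
  rw [hdefect, norm_smul, norm_inv, norm_pow, Real.norm_two, inv_mul_eq_div]
  gcongr
  exact hf _ _

lemma dist_hyersSeq_succ_le (n : ℕ) (x : G) :
    dist (hyersSeq f n x) (hyersSeq f (n + 1) x) ≤ δ / 2 * (1 / 2) ^ n := by
  have hdefect : hyersSeq f (n + 1) x - hyersSeq f n x =
      ((2 : ℝ) ^ (n + 1))⁻¹ • (f (2 ^ n • x + 2 ^ n • x) - f (2 ^ n • x) - f (2 ^ n • x)) := by
    rw [← two_nsmul, smul_smul, ← pow_succ', hyersSeq, hyersSeq, pow_succ]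
    module
  rw [dist_comm, dist_eq_norm, hdefect, norm_smul, norm_inv, norm_pow, Real.norm_two,
    inv_mul_eq_div, div_pow, one_pow, pow_succ]
  calc ‖f (2 ^ n • x + 2 ^ n • x) - f (2 ^ n • x) - f (2 ^ n • x)‖ / (2 ^ n * 2)
      ≤ δ / (2 ^ n * 2) := by gcongr; exact hf _ _
    _ = δ / 2 * (1 / 2 ^ n) := by field_simp

variable [CompleteSpace E]

theorem exists_addMonoidHom_norm_sub_le : ∃ a : G →+ E, ∀ x, ‖f x - a x‖ ≤ δ := by
  have hlim (x : G) : Tendsto (hyersSeq f · x) atTop (𝓝 (limUnder atTop (hyersSeq f · x))) :=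
    (cauchySeq_of_le_geometric _ _ (by norm_num) (dist_hyersSeq_succ_le hf · x)).tendsto_limUnder
  have hadd (x y : G) : limUnder atTop (hyersSeq f · (x + y)) =
      limUnder atTop (hyersSeq f · x) + limUnder atTop (hyersSeq f · y) := by
    have hdefect_tendsto : Tendsto (fun n ↦ hyersSeq f n (x + y) - hyersSeq f n x -
        hyersSeq f n y) atTop (𝓝 0) :=
      squeeze_zero_norm (norm_hyersSeq_add_sub_le hf · x y)
        (tendsto_const_nhds.div_atTop (tendsto_pow_atTop_atTop_of_one_lt one_lt_two))
    rw [← sub_eq_zero, ← sub_sub]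
    exact tendsto_nhds_unique (((hlim _).sub (hlim x)).sub (hlim y)) hdefect_tendsto
  refine ⟨AddMonoidHom.mk' (fun x ↦ limUnder atTop (hyersSeq f · x)) hadd, fun x ↦ ?_⟩
  have hdist := dist_le_of_le_geometric_of_tendsto₀ _ _ (by norm_num)
    (dist_hyersSeq_succ_le hf · x) (hlim x)
  rw [hyersSeq_zero, dist_eq_norm] at hdist
  simpa using hdist.trans_eq (by ring)

end Hyers

theorem stmt_7_general (ε : ℝ) (g : ℝ → ℝ)
    (hg : ∀ t v : ℝ, 0 < t → 0 < v → |g (t * v) - g v - g t| ≤ 6 * ε) :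
    ∃ l : ℝ → ℝ, (∀ x y : ℝ, 0 < x → 0 < y → l (x * y) = l x + l y) ∧
      ∀ u : ℝ, 0 < u → |g u - l u| ≤ 6 * ε := by
  have hexp : ∀ x y, ‖g (Real.exp (x + y)) - g (Real.exp x) - g (Real.exp y)‖ ≤ 6 * ε := by
    intro x y
    rw [Real.norm_eq_abs, Real.exp_add, sub_right_comm]
    exact hg _ _ (Real.exp_pos x) (Real.exp_pos y)
  obtain ⟨a, ha⟩ := exists_addMonoidHom_norm_sub_le (f := fun x ↦ g (Real.exp x)) hexp
  refine ⟨a ∘ Real.log, fun x y hx hy ↦ ?_, fun u hu ↦ ?_⟩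
  · simp [Real.log_mul hx.ne' hy.ne']
  · simpa [Real.exp_log hu] using ha (Real.log u)

theorem stmt_7 (ε : ℝ) (hε : 0 ≤ ε) (g : ℝ → ℝ)
    (hg : ∀ t v : ℝ, 0 < t → 0 < v → |g (t * v) - g v - g t| ≤ 6 * ε) :
    ∃ l : ℝ → ℝ, (∀ x y : ℝ, 0 < x → 0 < y → l (x * y) = l x + l y) ∧
      ∀ u : ℝ, 0 < u → |g u - l u| ≤ 6 * ε :=
  stmt_7_general ε g hg
end

section
/- Let α = 0 and F : ℝ₊₊² → ℝ satisfy F(tu, tv) = F(u,v) for all t, u, v > 0. Define g(u) = F(u,1) - F(1,u) and G(u,v) = F(u,v) + g(v), and assume |G(u,v) - G(v,u)| ≤ 3ε for all u, v > 0. Then |g(tv) - g(v) + g(u) - g(tu)| ≤ 6ε for all t, u, v > 0, and in particular (since g(1) = 0) |g(tv) - g(v) - g(t)| ≤ 6ε for all t, v > 0. -/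
/-! Comparing `G` at the pair `(tv, v)` and its swap, homogeneity turns `F (tv) v - F v (tv)` into
`g t`, so the hypothesis says that `g` is `3ε`-quasi-additive on the multiplicative group:
`|g t + g v - g (tv)| ≤ 3ε`. Subtracting two such inequalities with the same `t` gives the `6ε` bound,
and `g 1 = 0` specializes it to the second claim. -/

lemma apply_mul_right_of_homogeneous {F : ℝ → ℝ → ℝ}
    (hhom : ∀ t u v : ℝ, 0 < t → 0 < u → 0 < v → F (t * u) (t * v) = F u v)
    {t s v : ℝ} (ht : 0 < t) (hs : 0 < s) (hv : 0 < v) : F (t * v) (s * v) = F t s := by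
  rw [mul_comm t v, mul_comm s v]
  exact hhom v t s hv ht hs

lemma abs_sub_sub_le_of_abs_add_sub_mul_le {g : ℝ → ℝ} {δ : ℝ}
    (hg : ∀ t v : ℝ, 0 < t → 0 < v → |g t + g v - g (t * v)| ≤ δ)
    {t u v : ℝ} (ht : 0 < t) (hu : 0 < u) (hv : 0 < v) :
    |g (t * v) - g v + g u - g (t * u)| ≤ 2 * δ := by
  calc |g (t * v) - g v + g u - g (t * u)|
      = |(g t + g u - g (t * u)) - (g t + g v - g (t * v))| := by ring_nf
    _ ≤ |g t + g u - g (t * u)| + |g t + g v - g (t * v)| := abs_sub _ _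
    _ ≤ 2 * δ := by linarith [hg t u ht hu, hg t v ht hv]

theorem stmt_8_general (ε : ℝ) (F : ℝ → ℝ → ℝ)
    (hhom : ∀ t u v : ℝ, 0 < t → 0 < u → 0 < v → F (t * u) (t * v) = F u v)
    (g : ℝ → ℝ) (hg : ∀ u : ℝ, 0 < u → g u = F u 1 - F 1 u)
    (G : ℝ → ℝ → ℝ) (hG : ∀ u v : ℝ, 0 < u → 0 < v → G u v = F u v + g v)
    (hb : ∀ u v : ℝ, 0 < u → 0 < v → |G u v - G v u| ≤ 3 * ε) :
    (∀ t u v : ℝ, 0 < t → 0 < u → 0 < v →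
      |g (t * v) - g v + g u - g (t * u)| ≤ 6 * ε) ∧
    (∀ t v : ℝ, 0 < t → 0 < v → |g (t * v) - g v - g t| ≤ 6 * ε) := by
  have quasi_additive : ∀ t v : ℝ, 0 < t → 0 < v → |g t + g v - g (t * v)| ≤ 3 * ε := by
    intro t v ht hv
    have htv : 0 < t * v := mul_pos ht hv
    have h := hb (t * v) v htv hv
    have e1 := apply_mul_right_of_homogeneous hhom ht one_pos hv
    have e2 := apply_mul_right_of_homogeneous hhom one_pos ht hv
    rw [one_mul] at e1 e2
    rw [hG _ _ htv hv, hG _ _ hv htv, e1, e2] at h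
    rw [hg t ht]
    convert h using 2
    ring
  have main : ∀ t u v : ℝ, 0 < t → 0 < u → 0 < v →
      |g (t * v) - g v + g u - g (t * u)| ≤ 6 * ε := fun t u v ht hu hv => by
    linarith [abs_sub_sub_le_of_abs_add_sub_mul_le quasi_additive ht hu hv]
  refine ⟨main, fun t v ht hv => ?_⟩
  have g_one : g 1 = 0 := by rw [hg 1 one_pos, sub_self]
  simpa [g_one] using main t 1 v ht one_pos hv

theorem stmt_8 (ε : ℝ) (hε : 0 ≤ ε) (F : ℝ → ℝ → ℝ)
    (hhom : ∀ t u v : ℝ, 0 < t → 0 < u → 0 < v → F (t * u) (t * v) = F u v)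
    (g : ℝ → ℝ) (hg : ∀ u : ℝ, 0 < u → g u = F u 1 - F 1 u)
    (G : ℝ → ℝ → ℝ) (hG : ∀ u v : ℝ, 0 < u → 0 < v → G u v = F u v + g v)
    (hb : ∀ u v : ℝ, 0 < u → 0 < v → |G u v - G v u| ≤ 3 * ε) :
    (∀ t u v : ℝ, 0 < t → 0 < u → 0 < v →
      |g (t * v) - g v + g u - g (t * u)| ≤ 6 * ε) ∧
    (∀ t v : ℝ, 0 < t → 0 < v → |g (t * v) - g v - g t| ≤ 6 * ε) :=
  stmt_8_general ε F hhom g hg G hG hb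
end

section
/- Let 0 < α, α ≠ 1, and F : ℝ₊₊² → ℝ satisfy F(tu, tv) = t^α F(u,v). Define g(u) = F(u,1) - F(1,u) and G(u,v) = F(u,v) + g(v), and assume |G(u,v) - G(v,u)| ≤ 3ε(u+v+1)^α for all u, v > 0. Then |t^α g(v) + g(t) - v^α g(t) - g(v)| ≤ 3ε[(t(v+1)+1)^α + (v+2)^α + (v(t+1)+1)^α + (t+2)^α] for all t, v > 0. -/
/-! Homogeneity gives `G (s * w) s - G s (s * w) = s ^ α * g w + g s - g (s * w)`, so the
symmetry defect of `G` bounds the failure of `g` to be a multiplicative `α`-cocycle. The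
expression in the theorem is the difference of the cocycle defects at `(t, v)` and `(v, t)`,
since `t * v = v * t`. -/

section CocycleDefect

variable {α : ℝ} {F G : ℝ → ℝ → ℝ} {g : ℝ → ℝ} {B : ℝ → ℝ → ℝ}

lemma abs_cocycle_defect_le
    (hhom : ∀ t u v : ℝ, 0 < t → 0 < u → 0 < v → F (t * u) (t * v) = t ^ α * F u v)
    (hg : ∀ u : ℝ, 0 < u → g u = F u 1 - F 1 u)
    (hG : ∀ u v : ℝ, 0 < u → 0 < v → G u v = F u v + g v)
    (hb : ∀ u v : ℝ, 0 < u → 0 < v → |G u v - G v u| ≤ B u v)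
    {s w : ℝ} (hs : 0 < s) (hw : 0 < w) :
    |s ^ α * g w - g (s * w) + g s| ≤ B (s * w) s := by
  have hsw : 0 < s * w := mul_pos hs hw
  have hF₁ : F (s * w) s = s ^ α * F w 1 := by simpa using hhom s w 1 hs hw one_pos
  have hF₂ : F s (s * w) = s ^ α * F 1 w := by simpa using hhom s 1 w hs one_pos hw
  have h := hb (s * w) s hsw hs
  rw [hG _ _ hsw hs, hG _ _ hs hsw, hF₁, hF₂] at h
  rw [hg w hw]
  convert h using 2
  ring

lemma abs_cocycle_defect_sub_le
    (hhom : ∀ t u v : ℝ, 0 < t → 0 < u → 0 < v → F (t * u) (t * v) = t ^ α * F u v)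
    (hg : ∀ u : ℝ, 0 < u → g u = F u 1 - F 1 u)
    (hG : ∀ u v : ℝ, 0 < u → 0 < v → G u v = F u v + g v)
    (hb : ∀ u v : ℝ, 0 < u → 0 < v → |G u v - G v u| ≤ B u v)
    {t v : ℝ} (ht : 0 < t) (hv : 0 < v) :
    |t ^ α * g v + g t - v ^ α * g t - g v| ≤ B (t * v) t + B (t * v) v := by
  have htv := abs_cocycle_defect_le hhom hg hG hb ht hv
  have hvt := abs_cocycle_defect_le hhom hg hG hb hv ht
  rw [mul_comm v t] at hvt
  calc |t ^ α * g v + g t - v ^ α * g t - g v|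
      = |(t ^ α * g v - g (t * v) + g t) - (v ^ α * g t - g (t * v) + g v)| := by ring_nf
    _ ≤ |t ^ α * g v - g (t * v) + g t| + |v ^ α * g t - g (t * v) + g v| := abs_sub _ _
    _ ≤ B (t * v) t + B (t * v) v := add_le_add htv hvt

end CocycleDefect

theorem stmt_9_general (α ε : ℝ) (F : ℝ → ℝ → ℝ)
    (hhom : ∀ t u v : ℝ, 0 < t → 0 < u → 0 < v → F (t * u) (t * v) = t ^ α * F u v)
    (g : ℝ → ℝ) (hg : ∀ u : ℝ, 0 < u → g u = F u 1 - F 1 u)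
    (G : ℝ → ℝ → ℝ) (hG : ∀ u v : ℝ, 0 < u → 0 < v → G u v = F u v + g v)
    (hb : ∀ u v : ℝ, 0 < u → 0 < v → |G u v - G v u| ≤ 3 * ε * (u + v + 1) ^ α) :
    ∀ t v : ℝ, 0 < t → 0 < v →
      |t ^ α * g v + g t - v ^ α * g t - g v| ≤
        3 * ε * ((t * (v + 1) + 1) ^ α + (v + 2) ^ α +
          (v * (t + 1) + 1) ^ α + (t + 2) ^ α) := by
  intro t v ht hv
  have hε : 0 ≤ 3 * ε := by
    have h := (abs_nonneg _).trans (hb 1 1 one_pos one_pos)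
    exact nonneg_of_mul_nonneg_left h (by positivity)
  have hv2 : 0 ≤ 3 * ε * (v + 2) ^ α := by positivity
  have ht2 : 0 ≤ 3 * ε * (t + 2) ^ α := by positivity
  calc |t ^ α * g v + g t - v ^ α * g t - g v|
      ≤ 3 * ε * (t * v + t + 1) ^ α + 3 * ε * (t * v + v + 1) ^ α :=
        abs_cocycle_defect_sub_le hhom hg hG hb ht hv
    _ = 3 * ε * (t * (v + 1) + 1) ^ α + 3 * ε * (v * (t + 1) + 1) ^ α := by ring_nf
    _ ≤ _ := by linarith

theorem stmt_9 (α ε : ℝ) (hα : 0 < α) (hα1 : α ≠ 1) (hε : 0 ≤ ε) (F : ℝ → ℝ → ℝ)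
    (hhom : ∀ t u v : ℝ, 0 < t → 0 < u → 0 < v → F (t * u) (t * v) = t ^ α * F u v)
    (g : ℝ → ℝ) (hg : ∀ u : ℝ, 0 < u → g u = F u 1 - F 1 u)
    (G : ℝ → ℝ → ℝ) (hG : ∀ u v : ℝ, 0 < u → 0 < v → G u v = F u v + g v)
    (hb : ∀ u v : ℝ, 0 < u → 0 < v → |G u v - G v u| ≤ 3 * ε * (u + v + 1) ^ α) :
    ∀ t v : ℝ, 0 < t → 0 < v →
      |t ^ α * g v + g t - v ^ α * g t - g v| ≤
        3 * ε * ((t * (v + 1) + 1) ^ α + (v + 2) ^ α +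
          (v * (t + 1) + 1) ^ α + (t + 2) ^ α) :=
  stmt_9_general α ε F hhom g hg G hG hb
end

section
/- Let 0 < α, α ≠ 1, ε ≥ 0, and g : ℝ₊₊ → ℝ satisfy |t^α g(v) + g(t) - v^α g(t) - g(v)| ≤ 3ε[(t(v+1)+1)^α + (v+2)^α + (v(t+1)+1)^α + (t+2)^α] for all t, v > 0. Then with c = g(1/2)/(2^{-α} - 1), the inequality |g(v) - c(v^α - 1)| ≤ 4·3^{α+1}ε/|2^{-α} - 1| holds for all v ∈ (0,1). -/
/-!
Specialise the functional inequality to `t = 1/2`. Dividing the expression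
`t ^ α * g v + g t - v ^ α * g t - g v` by `t ^ α - 1 = 2 ^ (-α) - 1` gives exactly
`g v - c * (v ^ α - 1)`, and for `v ∈ (0, 1)` the four bases on the right-hand side lie in
`[0, 3]`, so the right-hand side is at most `3 * ε * 4 * 3 ^ α = 4 * 3 ^ (α + 1) * ε`.
-/

open Real

lemma sub_div_sub_one_mul_sub_one {a b x y : ℝ} (ha : a ≠ 1) :
    x - y / (a - 1) * (b - 1) = (a * x + y - b * y - x) / (a - 1) := by
  have : a - 1 ≠ 0 := sub_ne_zero.mpr ha
  field_simp
  ring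

lemma one_half_rpow (α : ℝ) : ((1 : ℝ) / 2) ^ α = (2 : ℝ) ^ (-α) := by
  rw [one_div, inv_rpow zero_le_two, rpow_neg zero_le_two]

lemma two_rpow_neg_lt_one {α : ℝ} (hα : 0 < α) : (2 : ℝ) ^ (-α) < 1 :=
  rpow_lt_one_of_one_lt_of_neg one_lt_two (neg_neg_of_pos hα)

lemma rpow_sum_at_one_half_le {α v : ℝ} (hα : 0 ≤ α) (hv0 : 0 ≤ v) (hv1 : v ≤ 1) :
    ((1 / 2) * (v + 1) + 1) ^ α + (v + 2) ^ α + (v * (1 / 2 + 1) + 1) ^ α + (1 / 2 + 2) ^ α ≤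
      4 * 3 ^ α := by
  have le_three : ∀ x : ℝ, 0 ≤ x → x ≤ 3 → x ^ α ≤ 3 ^ α := fun x hx0 hx3 =>
    rpow_le_rpow hx0 hx3 hα
  linarith [le_three ((1 / 2) * (v + 1) + 1) (by linarith) (by linarith),
    le_three (v + 2) (by linarith) (by linarith),
    le_three (v * (1 / 2 + 1) + 1) (by linarith) (by linarith),
    le_three (1 / 2 + 2) (by norm_num) (by norm_num)]

theorem stmt_10_general (α ε : ℝ) (hα : 0 < α) (hε : 0 ≤ ε) (g : ℝ → ℝ)
    (hb : ∀ t v : ℝ, 0 < t → 0 < v →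
      |t ^ α * g v + g t - v ^ α * g t - g v| ≤
        3 * ε * ((t * (v + 1) + 1) ^ α + (v + 2) ^ α +
          (v * (t + 1) + 1) ^ α + (t + 2) ^ α)) :
    ∀ v : ℝ, v ∈ Set.Ioo (0 : ℝ) 1 →
      |g v - g (1 / 2) / ((2 : ℝ) ^ (-α) - 1) * (v ^ α - 1)| ≤
        4 * 3 ^ (α + 1) * ε / |(2 : ℝ) ^ (-α) - 1| := by
  rintro v ⟨hv0, hv1⟩
  have hbound : |((1 : ℝ) / 2) ^ α * g v + g (1 / 2) - v ^ α * g (1 / 2) - g v| ≤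
      4 * 3 ^ (α + 1) * ε :=
    calc _ ≤ 3 * ε * (4 * 3 ^ α) :=
          (hb (1 / 2) v one_half_pos hv0).trans <| mul_le_mul_of_nonneg_left
            (rpow_sum_at_one_half_le hα.le hv0.le hv1.le) (by positivity)
      _ = 4 * 3 ^ (α + 1) * ε := by rw [rpow_add_one three_ne_zero]; ring
  rw [sub_div_sub_one_mul_sub_one (two_rpow_neg_lt_one hα).ne, ← one_half_rpow, abs_div]
  gcongr

theorem stmt_10 (α ε : ℝ) (hα : 0 < α) (hα1 : α ≠ 1) (hε : 0 ≤ ε) (g : ℝ → ℝ)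
    (hb : ∀ t v : ℝ, 0 < t → 0 < v →
      |t ^ α * g v + g t - v ^ α * g t - g v| ≤
        3 * ε * ((t * (v + 1) + 1) ^ α + (v + 2) ^ α +
          (v * (t + 1) + 1) ^ α + (t + 2) ^ α)) :
    ∀ v : ℝ, v ∈ Set.Ioo (0 : ℝ) 1 →
      |g v - g (1 / 2) / ((2 : ℝ) ^ (-α) - 1) * (v ^ α - 1)| ≤
        4 * 3 ^ (α + 1) * ε / |(2 : ℝ) ^ (-α) - 1| :=
  stmt_10_general α ε hα hε g hb
end

section
/- Let α > 0, α ≠ 1, ε ≥ 0. If f : (0,1) → ℝ satisfies |f(x) + (1-x)^α f(y/(1-x)) - f(y) - (1-y)^α f(x/(1-y))| ≤ ε for all (x,y) with x, y, x+y ∈ (0,1), then there exist a, b ∈ ℝ such that |f(x) - [a x^α + b(1-x)^α - b]| ≤ K(α)ε for all x ∈ (0,1), where K(α) = |2^{1-α} - 1|^{-1}(3 + 12·2^α + 32·3^{α+1}/|2^{-α} - 1|). -/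
/-!
Split `f` into its skew part `Ψ t = f t - f (1 - t)` and its symmetric part `f t + f (1 - t)`.

The homogeneous extension `Φ p q = (p + q) ^ α * Ψ (p / (p + q))` is an approximate cocycle:
`Φ p q - Φ p r - Φ r q` is a combination of three defects of the equation. Hence `φ u = Φ u 1`
satisfies `φ (u v) ≈ φ u + u ^ α φ v`, and comparing this with `φ (v u)` forces
`φ u ≈ c (1 - u ^ α)`, so that `Ψ t ≈ c ((1 - t) ^ α - t ^ α)`.

The defect of the equation is linear in `f` and vanishes on `a s ^ α + b (1 - s) ^ α - b`, so
`h = f + f (1 - ·) + c` is again an approximate solution, now symmetric. For such an `h`, three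
instances of the equation give `(2 ^ (1 - α) - 1) h t ≈ (t ^ α + (1 - t) ^ α - 1) h (1/2)`, and
for `α ≠ 1` we may divide. Finally `f = (Ψ + h - c) / 2`.
-/

open Set Real

noncomputable section

lemma rpow_mul_div_rpow {α a b : ℝ} (ha : 0 < a) (hb : 0 ≤ b) :
    a ^ α * (b / a) ^ α = b ^ α := by
  rw [← mul_rpow ha.le (div_nonneg hb ha.le), mul_div_cancel₀ _ ha.ne']

lemma abs_rpow_mul_le {α s : ℝ} (hα : 0 ≤ α) (hs : 0 ≤ s) (hs1 : s ≤ 1) (a : ℝ) :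
    |s ^ α * a| ≤ |a| := by
  rw [abs_mul, abs_of_nonneg (rpow_nonneg hs α)]
  exact mul_le_of_le_one_left (abs_nonneg a) (rpow_le_one hs hs1 hα)

lemma half_rpow (α : ℝ) : (1 / 2 : ℝ) ^ α = 2 ^ (-α) := by
  rw [one_div, inv_rpow zero_le_two, rpow_neg zero_le_two]

lemma one_sub_two_rpow_neg_pos {α : ℝ} (hα : 0 < α) : 0 < 1 - (2 : ℝ) ^ (-α) :=
  sub_pos.2 (rpow_lt_one_of_one_lt_of_neg one_lt_two (neg_neg_of_pos hα))

lemma two_mul_half_rpow (α : ℝ) : 2 * (1 / 2 : ℝ) ^ α = 2 ^ (1 - α) := by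
  rw [half_rpow, rpow_sub two_pos, rpow_one, rpow_neg zero_le_two, div_eq_mul_inv]

lemma one_sub_div_add_left {p q : ℝ} (h : p + q ≠ 0) : 1 - p / (p + q) = q / (p + q) := by
  field_simp; ring

lemma one_sub_div_add_right {p q : ℝ} (h : p + q ≠ 0) : 1 - q / (p + q) = p / (p + q) := by
  field_simp; ring

lemma abs_one_sub_rpow_mul_sub_le {α η : ℝ} {φ : ℝ → ℝ}
    (hφ : ∀ u v, 0 < u → u < 1 → 0 < v → v < 1 →
      |φ (u * v) - φ u - u ^ α * φ v| ≤ η)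
    {u v : ℝ} (hu : 0 < u) (hu1 : u < 1) (hv : 0 < v) (hv1 : v < 1) :
    |(1 - v ^ α) * φ u - (1 - u ^ α) * φ v| ≤ 2 * η := by
  have h1 := hφ u v hu hu1 hv hv1
  have h2 := hφ v u hv hv1 hu hu1
  rw [mul_comm v u] at h2
  rw [abs_le] at *
  constructor <;> linarith

/-- The defect of `f` in the fundamental equation of information of degree `α`. -/
def feiDefect (α : ℝ) (f : ℝ → ℝ) (x y : ℝ) : ℝ :=
  f x + (1 - x) ^ α * f (y / (1 - x)) - f y - (1 - y) ^ α * f (x / (1 - y))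

def FEIApprox (α ε : ℝ) (f : ℝ → ℝ) : Prop :=
  ∀ x y : ℝ, 0 < x → 0 < y → x + y < 1 → |feiDefect α f x y| ≤ ε

def feiSolution (α a b s : ℝ) : ℝ := a * s ^ α + b * (1 - s) ^ α - b

section Linearity

variable (α : ℝ) (f g : ℝ → ℝ) (x y : ℝ)

lemma feiDefect_add : feiDefect α (f + g) x y = feiDefect α f x y + feiDefect α g x y := by
  simp only [feiDefect, Pi.add_apply]; ring

lemma feiDefect_sub : feiDefect α (f - g) x y = feiDefect α f x y - feiDefect α g x y := by
  simp only [feiDefect, Pi.sub_apply]; ring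

lemma feiDefect_smul (c : ℝ) : feiDefect α (c • f) x y = c * feiDefect α f x y := by
  simp only [feiDefect, Pi.smul_apply, smul_eq_mul]; ring

end Linearity

lemma feiDefect_feiSolution (α a b : ℝ) {x y : ℝ} (hx : 0 < x) (hy : 0 < y) (hxy : x + y < 1) :
    feiDefect α (feiSolution α a b) x y = 0 := by
  have hx' : 0 < 1 - x := by linarith
  have hy' : 0 < 1 - y := by linarith
  have hxy' : 0 ≤ 1 - x - y := by linarith
  have ex : 1 - y / (1 - x) = (1 - x - y) / (1 - x) := by field_simp
  have ey : 1 - x / (1 - y) = (1 - x - y) / (1 - y) := by field_simp; ring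
  simp only [feiDefect, feiSolution, ex, ey]
  linear_combination a * rpow_mul_div_rpow (α := α) hx' hy.le
    + b * rpow_mul_div_rpow (α := α) hx' hxy' - a * rpow_mul_div_rpow (α := α) hy' hx.le
    - b * rpow_mul_div_rpow (α := α) hy' hxy'

lemma abs_feiDefect_le {α M : ℝ} {e : ℝ → ℝ} (hα : 0 ≤ α)
    (he : ∀ s ∈ Ioo (0 : ℝ) 1, |e s| ≤ M) {x y : ℝ} (hx : 0 < x) (hy : 0 < y)
    (hxy : x + y < 1) : |feiDefect α e x y| ≤ 4 * M := by
  have hx' : 0 < 1 - x := by linarith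
  have hy' : 0 < 1 - y := by linarith
  have h1 := he x ⟨hx, by linarith⟩
  have h2 := (abs_rpow_mul_le hα hx'.le (by linarith) _).trans
    (he (y / (1 - x)) ⟨by positivity, (div_lt_one hx').2 (by linarith)⟩)
  have h3 := he y ⟨hy, by linarith⟩
  have h4 := (abs_rpow_mul_le hα hy'.le (by linarith) _).trans
    (he (x / (1 - y)) ⟨by positivity, (div_lt_one hy').2 (by linarith)⟩)
  unfold feiDefect
  rw [abs_le] at *
  constructor <;> linarith

def skewPart (f : ℝ → ℝ) (t : ℝ) : ℝ := f t - f (1 - t)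

def skewCocycle (α : ℝ) (f : ℝ → ℝ) (p q : ℝ) : ℝ :=
  (p + q) ^ α * skewPart f (p / (p + q))

section SkewPart

variable {α ε : ℝ} {f : ℝ → ℝ}

lemma skewCocycle_swap {p q : ℝ} (h : p + q ≠ 0) :
    skewCocycle α f q p = -skewCocycle α f p q := by
  simp only [skewCocycle, skewPart, add_comm q p, one_sub_div_add_left h, one_sub_div_add_right h]
  ring

lemma skewCocycle_mul_mul {l p q : ℝ} (hl : 0 < l) (hpq : 0 < p + q) :
    skewCocycle α f (l * p) (l * q) = l ^ α * skewCocycle α f p q := by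
  simp only [skewCocycle, ← mul_add, mul_rpow hl.le hpq.le, mul_div_mul_left _ _ hl.ne']
  ring

lemma skewCocycle_cocycle_eq {p q r : ℝ} (hp : 0 < p) (hq : 0 < q) (hr : 0 < r)
    (hs : p + q + r = 1) :
    skewCocycle α f p q - skewCocycle α f p r - skewCocycle α f r q =
      feiDefect α f p q - feiDefect α f p r + feiDefect α f q r := by
  have h1p : 1 - p = q + r := by linarith
  have h1q : 1 - q = p + r := by linarith
  have h1r : 1 - r = p + q := by linarith
  simp only [skewCocycle, skewPart, feiDefect, h1p, h1q, h1r, add_comm r q,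
    one_sub_div_add_left (by positivity : p + q ≠ 0),
    one_sub_div_add_left (by positivity : p + r ≠ 0),
    one_sub_div_add_right (by positivity : q + r ≠ 0)]
  ring

lemma abs_skewCocycle_cocycle_le (hf : FEIApprox α ε f) {p q r : ℝ} (hp : 0 < p) (hq : 0 < q)
    (hr : 0 < r) :
    |skewCocycle α f p q - skewCocycle α f p r - skewCocycle α f r q| ≤
      3 * ε * (p + q + r) ^ α := by
  set s := p + q + r with hs_def
  have hs : 0 < s := by positivity
  have hscale : ∀ a b : ℝ, 0 < a → 0 < b →
      skewCocycle α f a b = s ^ α * skewCocycle α f (a / s) (b / s) := by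
    intro a b ha hb
    rw [← skewCocycle_mul_mul hs (by positivity), mul_div_cancel₀ _ hs.ne',
      mul_div_cancel₀ _ hs.ne']
  have hsum : p / s + q / s + r / s = 1 := by field_simp; exact hs_def.symm
  rw [hscale p q hp hq, hscale p r hp hr, hscale r q hr hq, ← mul_sub, ← mul_sub, abs_mul,
    abs_of_nonneg (rpow_nonneg hs.le α), skewCocycle_cocycle_eq (by positivity) (by positivity)
    (by positivity) hsum, mul_comm]
  gcongr
  have h1 := hf (p / s) (q / s) (by positivity) (by positivity) (by linarith [div_pos hr hs])
  have h2 := hf (p / s) (r / s) (by positivity) (by positivity) (by linarith [div_pos hq hs])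
  have h3 := hf (q / s) (r / s) (by positivity) (by positivity) (by linarith [div_pos hp hs])
  rw [abs_le] at *
  constructor <;> linarith

lemma abs_skewCocycle_mul_le (hα : 0 ≤ α) (hε : 0 ≤ ε) (hf : FEIApprox α ε f) {u v : ℝ}
    (hu : 0 < u) (hu1 : u < 1) (hv : 0 < v) (hv1 : v < 1) :
    |skewCocycle α f (u * v) 1 - skewCocycle α f u 1 - u ^ α * skewCocycle α f v 1| ≤
      3 * ε * 3 ^ α := by
  have h := abs_skewCocycle_cocycle_le hf (mul_pos hu hv) hu one_pos
  have hscale : skewCocycle α f (u * v) u = u ^ α * skewCocycle α f v 1 := by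
    simpa using skewCocycle_mul_mul (α := α) (f := f) hu (p := v) (q := 1) (by positivity)
  rw [hscale, skewCocycle_swap (by positivity : u + 1 ≠ 0), ← abs_neg] at h
  calc _ = _ := by ring_nf
    _ ≤ 3 * ε * (u * v + u + 1) ^ α := h
    _ ≤ 3 * ε * 3 ^ α := by gcongr; nlinarith

lemma abs_skewCocycle_sub_le (hα : 0 < α) (hε : 0 ≤ ε) (hf : FEIApprox α ε f) {u : ℝ}
    (hu : 0 < u) (hu1 : u < 1) :
    |skewCocycle α f u 1 - skewCocycle α f (1 / 2) 1 / (1 - 2 ^ (-α)) * (1 - u ^ α)| ≤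
      6 * ε * 3 ^ α / (1 - 2 ^ (-α)) := by
  have hN := one_sub_two_rpow_neg_pos hα
  have h := abs_one_sub_rpow_mul_sub_le (φ := fun u ↦ skewCocycle α f u 1)
    (fun u v hu hu1 hv hv1 ↦ abs_skewCocycle_mul_le hα.le hε hf hu hu1 hv hv1)
    hu hu1 one_half_pos one_half_lt_one
  rw [half_rpow] at h
  rw [le_div_iff₀ hN, ← abs_of_pos hN, ← abs_mul, abs_of_pos hN]
  calc _ = _ := by field_simp
    _ ≤ _ := h.trans_eq (by ring)

lemma abs_skewPart_sub_le (hα : 0 < α) (hε : 0 ≤ ε) (hf : FEIApprox α ε f)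
    {x : ℝ} (hx : x ∈ Ioo (0 : ℝ) 1) :
    |skewPart f x - skewCocycle α f (1 / 2) 1 / (1 - 2 ^ (-α)) * ((1 - x) ^ α - x ^ α)| ≤
      (3 * 2 ^ α + 12 * 3 ^ α / (1 - 2 ^ (-α))) * ε := by
  obtain ⟨hx, hx1⟩ := hx
  have hΨ : skewCocycle α f x (1 - x) = skewPart f x := by simp [skewCocycle]
  have h := abs_skewCocycle_cocycle_le hf hx (by linarith : 0 < 1 - x) one_pos
  rw [skewCocycle_swap (by linarith : 1 - x + 1 ≠ 0), hΨ, add_sub_cancel,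
    one_add_one_eq_two] at h
  have hx' := abs_skewCocycle_sub_le hα hε hf hx hx1
  have hx'' := abs_skewCocycle_sub_le hα hε hf (by linarith : 0 < 1 - x) (by linarith)
  set c := skewCocycle α f (1 / 2) 1 / (1 - 2 ^ (-α))
  set N := 1 - (2 : ℝ) ^ (-α)
  obtain ⟨h1, h2⟩ := abs_le.1 h
  obtain ⟨h3, h4⟩ := abs_le.1 hx'
  obtain ⟨h5, h6⟩ := abs_le.1 hx''
  have hconst : 3 * ε * 2 ^ α + 6 * ε * 3 ^ α / N + 6 * ε * 3 ^ α / N =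
      (3 * 2 ^ α + 12 * 3 ^ α / N) * ε := by ring
  rw [abs_le]
  constructor <;> linarith

end SkewPart

lemma FEIApprox.add_reflect {α ε c M : ℝ} {f : ℝ → ℝ} (hα : 0 ≤ α)
    (hf : FEIApprox α ε f)
    (hΨ : ∀ s ∈ Ioo (0 : ℝ) 1, |skewPart f s - c * ((1 - s) ^ α - s ^ α)| ≤ M) :
    FEIApprox α (2 * ε + 4 * M) (fun s ↦ f s + f (1 - s) + c) := by
  intro x y hx hy hxy
  have hsplit : (fun s ↦ f s + f (1 - s) + c) =
      (2 : ℝ) • f - (fun s ↦ skewPart f s - c * ((1 - s) ^ α - s ^ α)) +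
        feiSolution α c (-c) := by
    funext s
    simp only [Pi.add_apply, Pi.sub_apply, Pi.smul_apply, smul_eq_mul, skewPart, feiSolution]
    ring
  rw [hsplit, feiDefect_add, feiDefect_sub, feiDefect_smul,
    feiDefect_feiSolution α c (-c) hx hy hxy, add_zero]
  have h1 := hf x y hx hy hxy
  have h2 := abs_feiDefect_le hα hΨ hx hy hxy
  rw [abs_le] at *
  constructor <;> linarith

lemma abs_two_rpow_sub_one_mul_sub_le_of_symm {α δ : ℝ} {h : ℝ → ℝ} (hα : 0 ≤ α)
    (hsymm : ∀ t, h (1 - t) = h t) (hh : FEIApprox α δ h) {t : ℝ} (ht : 0 < t) (ht1 : t < 1) :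
    |(2 ^ (1 - α) - 1) * h t - (t ^ α + (1 - t) ^ α - 1) * h (1 / 2)| ≤ 3 * δ := by
  have h2t : 0 < 2 - t := by linarith
  have h1t : 0 < 1 - t := by linarith
  set w := (1 - t / 2) ^ α
  have key : (2 ^ (1 - α) - 1) * h t - (t ^ α + (1 - t) ^ α - 1) * h (1 / 2) =
      -(feiDefect α h (1 - t) (t / 2) - feiDefect α h (1 / 2) (t / 2) +
        w * feiDefect α h (t / (2 - t)) ((1 - t) / (2 - t))) := by
    have a1 : t / 2 / t = 1 / 2 := by field_simp
    have a2 : (1 - t) / (1 - t / 2) = 1 - t / (2 - t) := by field_simp; ring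
    have a3 : t / 2 / (1 / 2) = t := by ring
    have a4 : 1 / 2 / (1 - t / 2) = 1 - (1 - t) / (2 - t) := by field_simp; ring
    have a5 : (1 - t) / (2 - t) / (1 - t / (2 - t)) = 1 / 2 := by
      rw [one_sub_div h2t.ne', div_div_div_cancel_right₀ h2t.ne', div_eq_iff (by linarith)]; ring
    have a6 : t / (2 - t) / (1 - (1 - t) / (2 - t)) = t := by field_simp; ring
    have p1 : w * (1 - t / (2 - t)) ^ α = (1 - t) ^ α := by
      rw [← mul_rpow (by linarith) (sub_nonneg.2 ((div_le_one h2t).2 (by linarith)))]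
      congr 1; field_simp; ring
    have p2 : w * (1 - (1 - t) / (2 - t)) ^ α = (1 / 2) ^ α := by
      rw [← mul_rpow (by linarith) (sub_nonneg.2 ((div_le_one h2t).2 (by linarith)))]
      congr 1; field_simp; ring
    rw [← two_mul_half_rpow]
    -- after the symmetry of `h`, only the values `h t` and `h (1 / 2)` survive
    simp only [feiDefect, a1, a2, a3, a4, a5, a6, hsymm, sub_sub_cancel,
      (by norm_num : (1 : ℝ) - 1 / 2 = 1 / 2)]
    linear_combination h (1 / 2) * p1 - h t * p2
  have A1 := hh (1 - t) (t / 2) (by linarith) (by linarith) (by linarith)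
  have A2 := hh (1 / 2) (t / 2) (by norm_num) (by linarith) (by linarith)
  have A3 := (abs_rpow_mul_le hα (by linarith : 0 ≤ 1 - t / 2) (by linarith) _).trans
    (hh (t / (2 - t)) ((1 - t) / (2 - t)) (by positivity) (by positivity)
      (by rw [← add_div, div_lt_one h2t]; linarith))
  rw [key, abs_neg]
  rw [abs_le] at *
  constructor <;> linarith

lemma abs_sub_feiSolution_le {α c κ B M₁ M₂ x : ℝ} {f : ℝ → ℝ} (hB : B ≠ 0)
    (h₁ : |skewPart f x - c * ((1 - x) ^ α - x ^ α)| ≤ M₁)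
    (h₂ : |B * (f x + f (1 - x) + c) - (x ^ α + (1 - x) ^ α - 1) * κ| ≤ M₂) :
    |f x - feiSolution α ((κ / B - c) / 2) ((κ / B + c) / 2) x| ≤ (M₁ + M₂ / |B|) / 2 := by
  have hsplit : f x - feiSolution α ((κ / B - c) / 2) ((κ / B + c) / 2) x =
      ((skewPart f x - c * ((1 - x) ^ α - x ^ α)) +
        (B * (f x + f (1 - x) + c) - (x ^ α + (1 - x) ^ α - 1) * κ) / B) / 2 := by
    simp only [skewPart, feiSolution]
    field_simp
    ring
  rw [hsplit, abs_div, abs_two]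
  gcongr
  exact (abs_add_le _ _).trans (add_le_add h₁ (by rw [abs_div]; gcongr))

lemma error_constant_le {A T N b ε : ℝ} (hA : 0 ≤ A) (hAT : A ≤ T) (hN : 0 < N)
    (hN1 : N ≤ 1) (hb : 0 < b) (hb1 : b ≤ 1) (hε : 0 ≤ ε) :
    ((3 * A + 12 * T / N) * ε + 3 * (2 * ε + 4 * ((3 * A + 12 * T / N) * ε)) / b) / 2 ≤
      b⁻¹ * (3 + 12 * A + 32 * (T * 3) / N) * ε := by
  set Q := 12 * T / N
  have hQ : 12 * A ≤ Q := by rw [le_div_iff₀ hN]; nlinarith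
  have hM : 0 ≤ (3 * A + Q) * ε := mul_nonneg (by linarith) hε
  calc _ ≤ ((3 * A + Q) * ε / b + 3 * (2 * ε + 4 * ((3 * A + Q) * ε)) / b) / 2 := by
        gcongr; exact le_div_self hM hb hb1
    _ = b⁻¹ * ((6 + 39 * A + 13 * Q) / 2 * ε) := by ring
    _ ≤ b⁻¹ * ((3 + 12 * A + 8 * Q) * ε) := by gcongr; linarith
    _ = _ := by ring

end

theorem stmt_13 (α ε : ℝ) (hα : 0 < α) (hα1 : α ≠ 1) (hε : 0 ≤ ε) (f : ℝ → ℝ)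
    (hf : ∀ x y : ℝ, 0 < x → 0 < y → x + y < 1 →
      |f x + (1 - x) ^ α * f (y / (1 - x)) - f y - (1 - y) ^ α * f (x / (1 - y))| ≤ ε) :
    ∃ a b : ℝ, ∀ x : ℝ, x ∈ Set.Ioo (0 : ℝ) 1 →
      |f x - (a * x ^ α + b * (1 - x) ^ α - b)| ≤
        |(2 : ℝ) ^ (1 - α) - 1|⁻¹ *
          (3 + 12 * 2 ^ α + 32 * 3 ^ (α + 1) / |(2 : ℝ) ^ (-α) - 1|) * ε := by
  have hf : FEIApprox α ε f := hf
  set c := skewCocycle α f (1 / 2) 1 / (1 - 2 ^ (-α))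
  have hΨ := fun s (hs : s ∈ Ioo (0 : ℝ) 1) ↦ abs_skewPart_sub_le hα hε hf hs
  have hh := hf.add_reflect hα.le hΨ
  set h := fun s ↦ f s + f (1 - s) + c
  have hsymm : ∀ t, h (1 - t) = h t := fun t ↦ by simp only [h, sub_sub_cancel]; ring
  have hB : (2 : ℝ) ^ (1 - α) - 1 ≠ 0 := by
    intro hB0
    have h20 : (2 : ℝ) ^ (1 - α) = 2 ^ (0 : ℝ) := by rw [rpow_zero]; linarith
    rw [rpow_right_inj two_pos (by norm_num)] at h20
    exact hα1 (by linarith)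
  refine ⟨_, _, fun x hx ↦ (abs_sub_feiSolution_le hB (hΨ x hx)
    (abs_two_rpow_sub_one_mul_sub_le_of_symm hα.le hsymm hh hx.1 hx.2)).trans ?_⟩
  have hN := one_sub_two_rpow_neg_pos hα
  have hB1 : |(2 : ℝ) ^ (1 - α) - 1| ≤ 1 := by
    have hlt : (2 : ℝ) ^ (1 - α) < 2 ^ (1 : ℝ) :=
      rpow_lt_rpow_of_exponent_lt one_lt_two (by linarith)
    rw [rpow_one] at hlt
    exact abs_le.2 ⟨by linarith [rpow_pos_of_pos two_pos (1 - α)], by linarith⟩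
  rw [abs_sub_comm ((2 : ℝ) ^ (-α)), abs_of_pos hN, rpow_add three_pos, rpow_one]
  exact error_constant_le (by positivity) (rpow_le_rpow zero_le_two (by norm_num) hα.le) hN
    (by linarith [rpow_pos_of_pos two_pos (-α)]) (abs_pos.2 hB) hB1 hε
end

section
/- Let α ≠ 1 be a fixed real. A function f : (0,1) → ℝ satisfies f(x) + (1-x)^α f(y/(1-x)) = f(y) + (1-y)^α f(x/(1-y)) for all (x,y) with x, y, x+y ∈ (0,1) if and only if: (in case α = 0) there exist a logarithmic function l : (0,1) → ℝ and c ∈ ℝ with f(x) = l(1-x) + c for all x ∈ (0,1); (in case α ∉ {0,1}) there exist a, b ∈ ℝ with f(x) = a x^α + b(1-x)^α - b for all x ∈ (0,1). -/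
/-!
The skew extension `φ(u, v) = (u + v)^α (f(u/(u+v)) - f(v/(u+v)))` is homogeneous of degree `α`,
and the equation makes it a cocycle on the positive reals, so `φ(u, v) = g(u) - g(v)` for the
potential `g(u) = φ(u, 1)`, which satisfies `g(l u) = g(l) + l^α g(u)`. For `α = 0` this makes
`-g` logarithmic; for `α ≠ 0`, comparing `g(2u)` with `g(u·2)` forces `g(u) = D (u^α - 1)`.
Subtracting the corresponding particular solution leaves a solution `F` with `F(t) = F(1 - t)`,
and evaluating the equation at three suitable points gives
`F(p) (1 - q^α - (1-q)^α) = F(q) (1 - p^α - (1-p)^α)`. Taking `q = 1/2`, where `α ≠ 1` makes the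
coefficient nonzero, determines `F`.
-/

open Real Set

def SolvesInfoEq (α : ℝ) (f : ℝ → ℝ) : Prop :=
  ∀ x y : ℝ, 0 < x → 0 < y → x + y < 1 →
    f x + (1 - x) ^ α * f (y / (1 - x)) = f y + (1 - y) ^ α * f (x / (1 - y))

def IsLogarithmicOnUnitInterval (l : ℝ → ℝ) : Prop :=
  ∀ x y : ℝ, x ∈ Ioo (0 : ℝ) 1 → y ∈ Ioo (0 : ℝ) 1 → x * y ∈ Ioo (0 : ℝ) 1 → l (x * y) = l x + l y

variable {α : ℝ} {f g : ℝ → ℝ}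

lemma rpow_mul_div_rpow_s15 {s u : ℝ} (hs : 0 < s) (hu : 0 ≤ u) (α : ℝ) :
    s ^ α * (u / s) ^ α = u ^ α := by
  rw [← mul_rpow hs.le (div_nonneg hu hs.le), mul_div_cancel₀ _ hs.ne']

lemma div_one_sub_mem_Ioo {x y : ℝ} (hy : 0 < y) (hxy : x + y < 1) :
    y / (1 - x) ∈ Ioo (0 : ℝ) 1 :=
  ⟨div_pos hy (by linarith), (div_lt_one (by linarith)).2 (by linarith)⟩

lemma one_sub_div_one_sub {x y : ℝ} (hx : x < 1) : 1 - y / (1 - x) = (1 - x - y) / (1 - x) := by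
  field_simp [(sub_pos.2 hx).ne']

namespace SolvesInfoEq

lemma congr (hf : SolvesInfoEq α f) (hfg : EqOn f g (Ioo 0 1)) : SolvesInfoEq α g := by
  intro x y hx hy hxy
  rw [← hfg ⟨hx, by linarith⟩, ← hfg ⟨hy, by linarith⟩, ← hfg (div_one_sub_mem_Ioo hy hxy),
    ← hfg (div_one_sub_mem_Ioo hx (by linarith))]
  exact hf x y hx hy hxy

lemma add (hf : SolvesInfoEq α f) (hg : SolvesInfoEq α g) : SolvesInfoEq α (f + g) :=
  fun x y hx hy hxy => by
    simp only [Pi.add_apply]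
    linear_combination hf x y hx hy hxy + hg x y hx hy hxy

lemma sub (hf : SolvesInfoEq α f) (hg : SolvesInfoEq α g) : SolvesInfoEq α (f - g) :=
  fun x y hx hy hxy => by
    simp only [Pi.sub_apply]
    linear_combination hf x y hx hy hxy - hg x y hx hy hxy

lemma const_mul (hf : SolvesInfoEq α f) (c : ℝ) : SolvesInfoEq α (fun x => c * f x) :=
  fun x y hx hy hxy => by linear_combination c * hf x y hx hy hxy

end SolvesInfoEq

lemma solvesInfoEq_rpow (α : ℝ) : SolvesInfoEq α (fun x => x ^ α) := by
  intro x y hx hy hxy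
  rw [rpow_mul_div_rpow_s15 (by linarith) hy.le, rpow_mul_div_rpow_s15 (by linarith) hx.le, add_comm]

lemma solvesInfoEq_one_sub_rpow_sub_one (α : ℝ) : SolvesInfoEq α (fun x => (1 - x) ^ α - 1) := by
  intro x y hx hy hxy
  beta_reduce
  rw [one_sub_div_one_sub (by linarith), one_sub_div_one_sub (by linarith)]
  have hx' := rpow_mul_div_rpow_s15 (α := α) (u := 1 - x - y) (s := 1 - x) (by linarith) (by linarith)
  have hy' := rpow_mul_div_rpow_s15 (α := α) (u := 1 - x - y) (s := 1 - y) (by linarith) (by linarith)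
  rw [show 1 - y - x = 1 - x - y by ring]
  linear_combination hx' - hy'

lemma solvesInfoEq_zero_const (c : ℝ) : SolvesInfoEq 0 (fun _ => c) := by
  intro x y _ _ _
  simp

lemma IsLogarithmicOnUnitInterval.solvesInfoEq_zero_comp_one_sub {l : ℝ → ℝ}
    (hl : IsLogarithmicOnUnitInterval l) : SolvesInfoEq 0 (fun x => l (1 - x)) := by
  have hquot : ∀ {s t : ℝ}, 0 < s → s < t → t < 1 → l t + l (s / t) = l s :=
    fun {s t} hs hst ht => by
    have ht0 : 0 < t := hs.trans hst
    have hts : t * (s / t) = s := mul_div_cancel₀ _ ht0.ne'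
    have h := hl t (s / t) ⟨ht0, ht⟩ ⟨div_pos hs ht0, (div_lt_one ht0).2 hst⟩
      (by rw [hts]; exact ⟨hs, hst.trans ht⟩)
    rw [← h, hts]
  intro x y hx hy hxy
  simp only [rpow_zero, one_mul]
  rw [one_sub_div_one_sub (by linarith), one_sub_div_one_sub (by linarith),
    hquot (by linarith) (by linarith) (by linarith),
    hquot (by linarith) (by linarith) (by linarith), sub_right_comm]

noncomputable def skewExt (α : ℝ) (f : ℝ → ℝ) (u v : ℝ) : ℝ :=
  (u + v) ^ α * (f (u / (u + v)) - f (v / (u + v)))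

noncomputable def skewPot (α : ℝ) (f : ℝ → ℝ) (u : ℝ) : ℝ := skewExt α f u 1

lemma skewExt_swap (u v : ℝ) : skewExt α f v u = -skewExt α f u v := by
  unfold skewExt
  rw [add_comm v u]
  ring

lemma skewExt_mul_mul {l : ℝ} (hl : 0 < l) {u v : ℝ} (huv : 0 ≤ u + v) :
    skewExt α f (l * u) (l * v) = l ^ α * skewExt α f u v := by
  unfold skewExt
  rw [← mul_add, mul_rpow hl.le huv, mul_div_mul_left _ _ hl.ne', mul_div_mul_left _ _ hl.ne']
  ring

namespace SolvesInfoEq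

lemma skewExt_add (hf : SolvesInfoEq α f) {x y : ℝ} (hx : 0 < x) (hy : 0 < y) (hxy : x + y < 1) :
    skewExt α f x (1 - x - y) = skewExt α f x y + skewExt α f y (1 - x - y) := by
  have hxy' := hf x y hx hy hxy
  have hxz := hf x (1 - x - y) hx (by linarith) (by linarith)
  have hyz := hf y (1 - x - y) hy (by linarith) (by linarith)
  rw [show (1 : ℝ) - (1 - x - y) = x + y by ring] at hxz hyz
  unfold skewExt
  rw [show x + (1 - x - y) = 1 - y by ring, show y + (1 - x - y) = 1 - x by ring]
  linear_combination hxz - hxy' - hyz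

/-- Homogeneity spreads `skewExt_add` from the simplex `x + y + z = 1` to all positive triples. -/
lemma skewExt_cocycle (hf : SolvesInfoEq α f) {x y z : ℝ} (hx : 0 < x) (hy : 0 < y) (hz : 0 < z) :
    skewExt α f x z = skewExt α f x y + skewExt α f y z := by
  set s := x + y + z
  have hs : 0 < s := by positivity
  have h := hf.skewExt_add (div_pos hx hs) (div_pos hy hs)
    (by rw [← add_div, div_lt_one hs]; linarith)
  rw [show 1 - x / s - y / s = z / s by field_simp; ring] at h
  have scale : ∀ {u v : ℝ}, 0 < u → 0 < v → skewExt α f u v = s ^ α * skewExt α f (u / s) (v / s) :=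
    fun {u v} hu hv => by
      rw [← skewExt_mul_mul hs (by positivity), mul_div_cancel₀ _ hs.ne', mul_div_cancel₀ _ hs.ne']
  rw [scale hx hz, scale hx hy, scale hy hz, h, mul_add]

lemma skewExt_eq_sub (hf : SolvesInfoEq α f) {u v : ℝ} (hu : 0 < u) (hv : 0 < v) :
    skewExt α f u v = skewPot α f u - skewPot α f v := by
  rw [hf.skewExt_cocycle hu one_pos hv, skewExt_swap v 1, skewPot, skewPot, sub_eq_add_neg]

lemma skewPot_mul (hf : SolvesInfoEq α f) {l u : ℝ} (hl : 0 < l) (hu : 0 < u) :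
    skewPot α f (l * u) = skewPot α f l + l ^ α * skewPot α f u := by
  have h := hf.skewExt_eq_sub (mul_pos hl hu) (mul_pos hl one_pos)
  rw [skewExt_mul_mul hl (by linarith), mul_one] at h
  simp only [skewPot] at h ⊢
  linarith

lemma sub_one_sub (hf : SolvesInfoEq α f) {t : ℝ} (ht : t ∈ Ioo (0 : ℝ) 1) :
    f t - f (1 - t) = skewPot α f t - skewPot α f (1 - t) := by
  rw [← hf.skewExt_eq_sub ht.1 (sub_pos.2 ht.2), skewExt, add_sub_cancel, one_rpow, div_one,
    div_one, one_mul]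

lemma homogeneous (hf : SolvesInfoEq α f) {u v w : ℝ} (hu : 0 < u) (hv : 0 < v) (hw : 0 < w) :
    (u + v + w) ^ α * f (u / (u + v + w)) + (v + w) ^ α * f (v / (v + w)) =
      (u + v + w) ^ α * f (v / (u + v + w)) + (u + w) ^ α * f (u / (u + w)) := by
  set s := u + v + w
  have hs : 0 < s := by positivity
  have h := hf (u / s) (v / s) (div_pos hu hs) (div_pos hv hs)
    (by rw [← add_div, div_lt_one hs]; linarith)
  have hvw : 1 - u / s = (v + w) / s := by field_simp; ring
  have huw : 1 - v / s = (u + w) / s := by field_simp; ring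
  rw [hvw, huw, div_div_div_cancel_right₀ hs.ne', div_div_div_cancel_right₀ hs.ne'] at h
  have kv := rpow_mul_div_rpow_s15 (u := v + w) hs (by positivity) α
  have ku := rpow_mul_div_rpow_s15 (u := u + w) hs (by positivity) α
  linear_combination s ^ α * h - f (v / (v + w)) * kv + f (u / (u + w)) * ku

lemma add_eq_of_symm (hf : SolvesInfoEq α f) (hsymm : ∀ t ∈ Ioo (0 : ℝ) 1, f (1 - t) = f t)
    {x y : ℝ} (hx : 0 < x) (hy : 0 < y) (hxy : x + y < 1) :
    f x + (1 - x) ^ α * f (y / (1 - x)) = f (x + y) + (x + y) ^ α * f (x / (x + y)) := by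
  have h := hf x (1 - x - y) hx (by linarith) (by linarith)
  have h₁ : f ((1 - x - y) / (1 - x)) = f (y / (1 - x)) := by
    rw [← one_sub_div_one_sub (by linarith), hsymm _ (div_one_sub_mem_Ioo hy hxy)]
  have h₂ : f (1 - x - y) = f (x + y) := by
    rw [sub_sub, hsymm _ ⟨by linarith, by linarith⟩]
  rwa [h₁, h₂, show 1 - (1 - x - y) = x + y by ring] at h

lemma mul_eq_mul_of_symm (hf : SolvesInfoEq α f) (hsymm : ∀ t ∈ Ioo (0 : ℝ) 1, f (1 - t) = f t)
    {p q : ℝ} (hp : p ∈ Ioo (0 : ℝ) 1) (hq : q ∈ Ioo (0 : ℝ) 1) :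
    f p * (1 - q ^ α - (1 - q) ^ α) = f q * (1 - p ^ α - (1 - p) ^ α) := by
  obtain ⟨hp0, hp1⟩ := hp
  obtain ⟨hq0, hq1⟩ := hq
  have hp' : 0 < 1 - p := by linarith
  have hq' : 0 < 1 - q := by linarith
  have h₁ := hf.add_eq_of_symm hsymm (mul_pos hp0 hq0) (mul_pos hp0 hq') (by linarith)
  have h₂ := hf.add_eq_of_symm hsymm (mul_pos hp0 hq0) (mul_pos hp' hq0) (by linarith)
  have h₃ := hf.homogeneous (mul_pos hp0 hq') (mul_pos hp' hq0) (mul_pos hp' hq')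
  have e₁ : p * q + p * (1 - q) = p := by ring
  have e₂ : p * q + (1 - p) * q = q := by ring
  have e₃ : p * (1 - q) + (1 - p) * q + (1 - p) * (1 - q) = 1 - p * q := by ring
  have e₄ : (1 - p) * q + (1 - p) * (1 - q) = 1 - p := by ring
  have e₅ : p * (1 - q) + (1 - p) * (1 - q) = 1 - q := by ring
  rw [e₁, mul_div_cancel_left₀ _ hp0.ne'] at h₁
  rw [e₂, mul_div_cancel_right₀ _ hq0.ne'] at h₂
  rw [e₃, e₄, e₅, mul_div_cancel_left₀ _ hp'.ne', mul_div_cancel_right₀ _ hq'.ne'] at h₃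
  linear_combination h₂ + h₃ - h₁

lemma eq_of_symm (hα : α ≠ 1) (hf : SolvesInfoEq α f)
    (hsymm : ∀ t ∈ Ioo (0 : ℝ) 1, f (1 - t) = f t) :
    ∃ c : ℝ, ∀ p ∈ Ioo (0 : ℝ) 1, f p = c * (1 - p ^ α - (1 - p) ^ α) := by
  have hhalf : (2⁻¹ : ℝ) ∈ Ioo 0 1 := ⟨by norm_num, by norm_num⟩
  have hk : 1 - (2⁻¹ : ℝ) ^ α - (1 - 2⁻¹) ^ α ≠ 0 := by
    have h2 : (2 : ℝ) ^ α ≠ 2 ^ (1 : ℝ) := by rwa [Ne, rpow_right_inj two_pos (by norm_num)]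
    rw [rpow_one] at h2
    rw [show (1 : ℝ) - 2⁻¹ = 2⁻¹ by norm_num, inv_rpow zero_le_two]
    intro h
    field_simp at h
    exact h2 (by linarith)
  refine ⟨f 2⁻¹ / (1 - (2⁻¹ : ℝ) ^ α - (1 - 2⁻¹) ^ α), fun p hp => ?_⟩
  rw [div_mul_eq_mul_div, eq_div_iff hk]
  exact hf.mul_eq_mul_of_symm hsymm hp hhalf

lemma skewPot_eq (h0 : α ≠ 0) (hf : SolvesInfoEq α f) :
    ∃ D : ℝ, ∀ u > 0, skewPot α f u = D * (u ^ α - 1) := by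
  have h2 : (2 : ℝ) ^ α - 1 ≠ 0 := by
    rw [sub_ne_zero, ← rpow_zero 2, Ne, rpow_right_inj two_pos (by norm_num)]
    exact h0
  refine ⟨skewPot α f 2 / (2 ^ α - 1), fun u hu => ?_⟩
  have h := hf.skewPot_mul hu two_pos
  rw [mul_comm, hf.skewPot_mul two_pos hu] at h
  rw [div_mul_eq_mul_div, eq_div_iff h2]
  linear_combination h

end SolvesInfoEq

lemma solvesInfoEq_zero_iff (f : ℝ → ℝ) :
    SolvesInfoEq 0 f ↔ ∃ (l : ℝ → ℝ) (c : ℝ),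
      IsLogarithmicOnUnitInterval l ∧ ∀ x ∈ Ioo (0 : ℝ) 1, f x = l (1 - x) + c := by
  constructor
  · intro hf
    have hlog : IsLogarithmicOnUnitInterval (fun x => -skewPot 0 f x) := fun x y hx hy _ => by
      dsimp only
      rw [hf.skewPot_mul hx.1 hy.1, rpow_zero, one_mul, neg_add]
    have hF := hf.sub hlog.solvesInfoEq_zero_comp_one_sub
    obtain ⟨c, hc⟩ := hF.eq_of_symm zero_ne_one fun t ht => by
      have h := hf.sub_one_sub ht
      simp only [Pi.sub_apply, sub_sub_cancel]
      linarith
    refine ⟨_, -c, hlog, fun x hx => ?_⟩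
    have h := hc x hx
    simp only [Pi.sub_apply, rpow_zero] at h
    linarith
  · rintro ⟨l, c, hl, hfx⟩
    exact (hl.solvesInfoEq_zero_comp_one_sub.add (solvesInfoEq_zero_const c)).congr
      fun x hx => (hfx x hx).symm

lemma solvesInfoEq_iff_of_ne_zero_of_ne_one (h0 : α ≠ 0) (h1 : α ≠ 1) (f : ℝ → ℝ) :
    SolvesInfoEq α f ↔
      ∃ a b : ℝ, ∀ x ∈ Ioo (0 : ℝ) 1, f x = a * x ^ α + b * (1 - x) ^ α - b := by
  constructor
  · intro hf
    obtain ⟨D, hD⟩ := hf.skewPot_eq h0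
    have hF := hf.sub ((solvesInfoEq_rpow α).const_mul D)
    obtain ⟨c, hc⟩ := hF.eq_of_symm h1 fun t ht => by
      have h := hf.sub_one_sub ht
      rw [hD t ht.1, hD (1 - t) (sub_pos.2 ht.2)] at h
      simp only [Pi.sub_apply]
      linarith
    refine ⟨D - c, -c, fun x hx => ?_⟩
    have h := hc x hx
    simp only [Pi.sub_apply] at h
    linear_combination h
  · rintro ⟨a, b, hfx⟩
    refine (((solvesInfoEq_rpow α).const_mul a).add
      ((solvesInfoEq_one_sub_rpow_sub_one α).const_mul b)).congr fun x hx => ?_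
    rw [hfx x hx, Pi.add_apply]
    ring

theorem stmt_15 (α : ℝ) (hα : α ≠ 1) (f : ℝ → ℝ) :
    (∀ x y : ℝ, 0 < x → 0 < y → x + y < 1 →
      f x + (1 - x) ^ α * f (y / (1 - x)) = f y + (1 - y) ^ α * f (x / (1 - y))) ↔
    ((α = 0 ∧ ∃ (l : ℝ → ℝ) (c : ℝ),
        (∀ x y : ℝ, x ∈ Set.Ioo (0 : ℝ) 1 → y ∈ Set.Ioo (0 : ℝ) 1 →
          x * y ∈ Set.Ioo (0 : ℝ) 1 → l (x * y) = l x + l y) ∧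
        ∀ x : ℝ, x ∈ Set.Ioo (0 : ℝ) 1 → f x = l (1 - x) + c) ∨
     (α ≠ 0 ∧ ∃ a b : ℝ, ∀ x : ℝ, x ∈ Set.Ioo (0 : ℝ) 1 →
        f x = a * x ^ α + b * (1 - x) ^ α - b)) := by
  rcases eq_or_ne α 0 with rfl | h0
  · simp only [true_and, ne_eq, not_true_eq_false, false_and, or_false]
    exact solvesInfoEq_zero_iff f
  · simp only [h0, false_and, ne_eq, not_false_eq_true, true_and, false_or]
    exact solvesInfoEq_iff_of_ne_zero_of_ne_one h0 hα f
end

section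
/- Let α < 0, ε ≥ 0, and f : [0,1] → ℝ satisfy |f(x) + (1-x)^α f(y/(1-x)) - f(y) - (1-y)^α f(x/(1-y))| ≤ ε for all (x,y) ∈ D = {(x,y) : x, y ∈ [0,1), x+y ≤ 1}. Then f(0) = 0, and moreover f(1) = a - b where a, b are constants such that |f(x) - [a x^α + b(1-x)^α - b]| ≤ K(α)ε holds on (0,1) with K(α) = (8 + 6·2^α + 2^{-α})/(2^{1-α} - 1). Consequently with h₁(0)=0, h₁(x)=a x^α + b(1-x)^α - b on (0,1), h₁(1)=a-b, one has |f(x) - h₁(x)| ≤ K(α)ε for all x ∈ [0,1]. -/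
/-!
Write `F f (x, y)` for the defect
`f x + (1 - x) ^ α f (y / (1 - x)) - f y - (1 - y) ^ α f (x / (1 - y))`
of the fundamental equation of information of degree `α`. For `0 < s ≤ 1/2`, `s ^ α F f (X, Y)`
is a signed combination of five defects at points of `D`, with weights at most `2 ^ (-α)`. If all
defects are at most `ε`, then `s ^ α |F f (X, Y)|` stays bounded while `s ^ α → ∞` as `s → 0⁺`
(here `α < 0`), so `f` solves the equation exactly on the interior of `D`: the equation is
superstable, and the error bound holds with `0` in place of `K(α) ε`.

An exact solution `h` with `h 1 = h (1/2) = 0` vanishes on `(0, 1)` as soon as `α ≠ 1`, and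
`a x ^ α + b (1 - x) ^ α - b` is an exact solution whose values at `1` and `1/2` can be matched.
-/

open Real Filter Topology Set

noncomputable def fundEqDefect (α : ℝ) (f : ℝ → ℝ) (x y : ℝ) : ℝ :=
  f x + (1 - x) ^ α * f (y / (1 - x)) - f y - (1 - y) ^ α * f (x / (1 - y))

def ApproxSolvesFundEq (α ε : ℝ) (f : ℝ → ℝ) : Prop :=
  ∀ x y : ℝ, 0 ≤ x → x < 1 → 0 ≤ y → y < 1 → x + y ≤ 1 → |fundEqDefect α f x y| ≤ ε

def SolvesFundEq (α : ℝ) (f : ℝ → ℝ) : Prop :=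
  ∀ x y : ℝ, 0 < x → 0 < y → x + y ≤ 1 → fundEqDefect α f x y = 0

lemma fundEqDefect_swap (α : ℝ) (f : ℝ → ℝ) (x y : ℝ) :
    fundEqDefect α f y x = -fundEqDefect α f x y := by
  unfold fundEqDefect; ring

lemma rpow_mul_rpow_div_cancel {c y : ℝ} (hc : 0 < c) (hy : 0 ≤ y) (α : ℝ) :
    c ^ α * (y / c) ^ α = y ^ α := by
  rw [div_rpow hy hc.le, mul_div_cancel₀ _ (rpow_pos_of_pos hc α).ne']

lemma rpow_mul_rpow_one_sub_div {c y : ℝ} (hc : 0 < c) (hy : y ≤ c) (α : ℝ) :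
    c ^ α * (1 - y / c) ^ α = (c - y) ^ α := by
  rw [← rpow_mul_rpow_div_cancel hc (sub_nonneg.mpr hy), sub_div, div_self hc.ne']

lemma eq_zero_of_eventually_rpow_mul_abs_le {α Z C : ℝ} (hα : α < 0)
    (h : ∀ᶠ s in 𝓝[>] 0, s ^ α * |Z| ≤ C) : Z = 0 := by
  by_contra hZ
  have hlim : Tendsto (fun s => s ^ α * |Z|) (𝓝[>] 0) atTop :=
    (tendsto_rpow_neg_nhdsGT_zero hα).atTop_mul_const (abs_pos.mpr hZ)
  obtain ⟨s, hs, hs'⟩ := (h.and (hlim.eventually_gt_atTop C)).exists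
  linarith

lemma rpow_mul_fundEqDefect (α : ℝ) (f : ℝ → ℝ) {s X Y : ℝ} (hs0 : 0 < s) (hs1 : s < 1)
    (hX0 : 0 < X) (hY0 : 0 < Y) (hXY : X + Y ≤ 1) :
    s ^ α * fundEqDefect α f X Y =
      fundEqDefect α f (s * X) (s * Y) - fundEqDefect α f (s * X) (1 - s)
      - fundEqDefect α f (1 - s) (s * Y)
      - (1 - s * X) ^ α * fundEqDefect α f (s * Y / (1 - s * X)) ((1 - s) / (1 - s * X))
      - (1 - s * Y) ^ α * fundEqDefect α f ((1 - s) / (1 - s * Y)) (s * X / (1 - s * Y)) := by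
  have h1x : 0 < 1 - s * X := by nlinarith
  have h1y : 0 < 1 - s * Y := by nlinarith
  have hXl : 0 < 1 - X := by linarith
  have hYl : 0 < 1 - Y := by linarith
  have m1 : (1 - s * X) ^ α * (1 - s * Y / (1 - s * X)) ^ α = (1 - s * X - s * Y) ^ α :=
    rpow_mul_rpow_one_sub_div h1x (by nlinarith) α
  have m2 : (1 - s * X) ^ α * (1 - (1 - s) / (1 - s * X)) ^ α = s ^ α * (1 - X) ^ α := by
    rw [rpow_mul_rpow_one_sub_div h1x (by nlinarith) α, ← mul_rpow hs0.le hXl.le]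
    ring_nf
  have m3 : (1 - s * Y) ^ α * (1 - s * X / (1 - s * Y)) ^ α = (1 - s * X - s * Y) ^ α := by
    rw [rpow_mul_rpow_one_sub_div h1y (by nlinarith) α]
    ring_nf
  have m4 : (1 - s * Y) ^ α * (1 - (1 - s) / (1 - s * Y)) ^ α = s ^ α * (1 - Y) ^ α := by
    rw [rpow_mul_rpow_one_sub_div h1y (by nlinarith) α, ← mul_rpow hs0.le hYl.le]
    ring_nf
  have hsX : s - s * X ≠ 0 := by nlinarith
  have hsY : s - s * Y ≠ 0 := by nlinarith
  simp only [fundEqDefect]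
  rw [sub_sub_cancel, mul_div_cancel_left₀ X hs0.ne', mul_div_cancel_left₀ Y hs0.ne',
    show (1 - s) / (1 - s * X) / (1 - s * Y / (1 - s * X)) = (1 - s) / (1 - s * X - s * Y) by
      field_simp,
    show s * Y / (1 - s * X) / (1 - (1 - s) / (1 - s * X)) = Y / (1 - X) by
      field_simp [hXl.ne', hsX]; ring,
    show s * X / (1 - s * Y) / (1 - (1 - s) / (1 - s * Y)) = X / (1 - Y) by
      field_simp [hYl.ne', hsY]; ring,
    show (1 - s) / (1 - s * Y) / (1 - s * X / (1 - s * Y)) = (1 - s) / (1 - s * X - s * Y) by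
      field_simp; ring]
  linear_combination f ((1 - s) / (1 - s * X - s * Y)) * (m1 - m3) - f (Y / (1 - X)) * m2
    + f (X / (1 - Y)) * m4

section Superstability

variable {α ε : ℝ} {f : ℝ → ℝ}

lemma abs_fundEqDefect_scaled_le (hf : ApproxSolvesFundEq α ε f) {s X Y : ℝ} (hs0 : 0 < s)
    (hs1 : s < 1) (hY0 : 0 < Y) (hXY : X + Y ≤ 1) :
    |fundEqDefect α f (s * Y / (1 - s * X)) ((1 - s) / (1 - s * X))| ≤ ε := by
  have h1x : 0 < 1 - s * X := by nlinarith
  refine hf _ _ (by positivity) ?_ (div_nonneg (by linarith) h1x.le) ?_ ?_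
  · rw [div_lt_one h1x]; nlinarith
  · rw [div_lt_one h1x]; nlinarith
  · rw [← add_div, div_le_one h1x]; nlinarith

lemma rpow_mul_abs_fundEqDefect_le (hf : ApproxSolvesFundEq α ε f) (hα : α < 0) {s X Y : ℝ}
    (hs0 : 0 < s) (hs1 : s ≤ 1 / 2) (hX0 : 0 < X) (hY0 : 0 < Y) (hXY : X + Y ≤ 1) :
    s ^ α * |fundEqDefect α f X Y| ≤ (3 + 2 * (1 / 2 : ℝ) ^ α) * ε := by
  have hs1' : s < 1 := by linarith
  have weight_le : ∀ {Z : ℝ}, 0 < Z → Z < 1 → |(1 - s * Z) ^ α| ≤ (1 / 2 : ℝ) ^ α :=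
      fun hZ0 hZ1 ↦ by
    rw [abs_of_nonneg (rpow_nonneg (by nlinarith) α)]
    exact rpow_le_rpow_of_nonpos (by norm_num) (by nlinarith) hα.le
  have B1 := hf (s * X) (s * Y) (by positivity) (by nlinarith) (by positivity) (by nlinarith)
    (by nlinarith)
  have B2 := hf (s * X) (1 - s) (by positivity) (by nlinarith) (by linarith) (by linarith)
    (by nlinarith)
  have B3 := hf (1 - s) (s * Y) (by linarith) (by linarith) (by positivity) (by nlinarith)
    (by nlinarith)
  have B4 := mul_le_mul (weight_le hX0 (by linarith))
    (abs_fundEqDefect_scaled_le hf hs0 hs1' hY0 hXY) (abs_nonneg _) (by positivity)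
  have B5 := mul_le_mul (weight_le hY0 (by linarith))
    (abs_fundEqDefect_scaled_le (X := Y) hf hs0 hs1' hX0 (by linarith)) (abs_nonneg _)
    (by positivity)
  rw [← abs_mul] at B4
  rw [← abs_mul, ← abs_neg, ← mul_neg, ← fundEqDefect_swap] at B5
  rw [← abs_of_pos (rpow_pos_of_pos hs0 α), ← abs_mul,
    rpow_mul_fundEqDefect α f hs0 hs1' hX0 hY0 hXY]
  rw [abs_le] at B1 B2 B3 B4 B5 ⊢
  constructor <;> linarith [B1.1, B1.2, B2.1, B2.2, B3.1, B3.2, B4.1, B4.2, B5.1, B5.2]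

theorem ApproxSolvesFundEq.solvesFundEq (hf : ApproxSolvesFundEq α ε f) (hα : α < 0) :
    SolvesFundEq α f := by
  intro X Y hX0 hY0 hXY
  refine eq_zero_of_eventually_rpow_mul_abs_le hα (C := (3 + 2 * (1 / 2 : ℝ) ^ α) * ε) ?_
  filter_upwards [Ioc_mem_nhdsGT (by norm_num : (0 : ℝ) < 1 / 2)] with s ⟨hs0, hs1⟩
  exact rpow_mul_abs_fundEqDefect_le hf hα hs0 hs1 hX0 hY0 hXY

lemma map_zero_of_approxSolvesFundEq (hf : ApproxSolvesFundEq α ε f) (hα : α < 0) :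
    f 0 = 0 := by
  refine eq_zero_of_eventually_rpow_mul_abs_le hα (C := ε + |f 0|) ?_
  filter_upwards [Ioc_mem_nhdsGT one_pos] with s ⟨hs0, hs1⟩
  have h := hf (1 - s) 0 (by linarith) (by linarith) le_rfl one_pos (by linarith)
  have hdefect : fundEqDefect α f (1 - s) 0 = s ^ α * f 0 - f 0 := by
    simp only [fundEqDefect, sub_sub_cancel, zero_div, sub_zero, one_rpow, div_one]
    ring
  rw [hdefect] at h
  have h' := abs_sub_abs_le_abs_sub (s ^ α * f 0) (f 0)
  rw [abs_mul, abs_of_pos (rpow_pos_of_pos hs0 α)] at h'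
  linarith

end Superstability

lemma solvesFundEq_rpow (α a b : ℝ) :
    SolvesFundEq α (fun x => a * x ^ α + b * (1 - x) ^ α - b) := by
  intro x y hx hy hxy
  have h1x : 0 < 1 - x := by linarith
  have h1y : 0 < 1 - y := by linarith
  have e1 := rpow_mul_rpow_div_cancel h1x hy.le α
  have e2 := rpow_mul_rpow_one_sub_div h1x (show y ≤ 1 - x by linarith) α
  have e3 := rpow_mul_rpow_div_cancel h1y hx.le α
  have e4 := rpow_mul_rpow_one_sub_div h1y (show x ≤ 1 - y by linarith) α
  simp only [fundEqDefect]
  linear_combination a * e1 + b * e2 - a * e3 - b * e4 + b * (congrArg (· ^ α) (by ring :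
    1 - x - y = 1 - y - x))

lemma two_mul_rpow_half_sub_one_ne_zero {α : ℝ} (hα : α ≠ 1) : 2 * (1 / 2 : ℝ) ^ α - 1 ≠ 0 := by
  intro h
  refine hα ((rpow_right_inj (by norm_num : (0 : ℝ) < 1 / 2) (by norm_num)).mp ?_)
  linarith [rpow_one (1 / 2 : ℝ)]

namespace SolvesFundEq

variable {α : ℝ} {h : ℝ → ℝ}

lemma sub {g : ℝ → ℝ} (hh : SolvesFundEq α h) (hg : SolvesFundEq α g) :
    SolvesFundEq α (fun x => h x - g x) := by
  intro x y hx hy hxy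
  have e := sub_eq_zero.mpr ((hh x y hx hy hxy).trans (hg x y hx hy hxy).symm)
  rw [← e]
  simp only [fundEqDefect]
  ring

lemma map_one_sub (hh : SolvesFundEq α h) (h1 : h 1 = 0) {x : ℝ} (hx0 : 0 < x) (hx1 : x < 1) :
    h (1 - x) = h x := by
  have e := hh x (1 - x) hx0 (by linarith) (by linarith)
  simp only [fundEqDefect, div_self (sub_pos.mpr hx1).ne', sub_sub_cancel, div_self hx0.ne',
    h1] at e
  linarith

lemma map_eq_map_half_add (hh : SolvesFundEq α h) (h1 : h 1 = 0) (hhalf : h (1 / 2) = 0)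
    {v : ℝ} (hv0 : 0 < v) (hv1 : v < 1) :
    h v = h (v / 2) + (1 - v / 2) ^ α * h (v / (2 - v)) := by
  have e := hh (1 - v) (v / 2) (by linarith) (by linarith) (by linarith)
  have hw0 : 0 < (1 - v) / (1 - v / 2) := div_pos (by linarith) (by linarith)
  have hw1 : (1 - v) / (1 - v / 2) < 1 := by rw [div_lt_one (by linarith)]; linarith
  simp only [fundEqDefect, sub_sub_cancel, show v / 2 / v = 1 / 2 by field_simp, hhalf] at e
  rw [← hh.map_one_sub h1 hw0 hw1, show 1 - (1 - v) / (1 - v / 2) = v / (2 - v) by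
    field_simp [show (2 : ℝ) - v ≠ 0 by linarith]; ring, hh.map_one_sub h1 hv0 hv1] at e
  linear_combination e

lemma rpow_half_mul_map (hh : SolvesFundEq α h) (hhalf : h (1 / 2) = 0) {t : ℝ} (ht0 : 0 < t)
    (ht1 : t < 1) :
    (1 / 2 : ℝ) ^ α * h t = h (t / 2) + (1 - t / 2) ^ α * h (1 / (2 - t)) := by
  have e := hh (1 / 2) (t / 2) (by norm_num) (by linarith) (by linarith)
  simp only [fundEqDefect, show (1 : ℝ) - 1 / 2 = 1 / 2 by norm_num,
    show t / 2 / (1 / 2 : ℝ) = t by ring,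
    show (1 / 2 : ℝ) / (1 - t / 2) = 1 / (2 - t) by
      rw [div_eq_div_iff (by linarith) (by linarith)]; ring, hhalf] at e
  linear_combination e

lemma eq_zero_of_map_one_of_map_half (hα : α ≠ 1) (hh : SolvesFundEq α h) (h1 : h 1 = 0)
    (hhalf : h (1 / 2) = 0) {z : ℝ} (hz0 : 0 < z) (hz1 : z < 1) : h z = 0 := by
  have h2z : 0 < 2 - z := by linarith
  set u := z / (2 - z) with hu
  have hu0 : 0 < u := by positivity
  have hu1 : u < 1 := by rw [hu, div_lt_one h2z]; linarith
  -- The halving relations at `z` and at `1 - u` close up because `(1 - z/2) (1 + u)/2 = 1/2`.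
  have e1 := hh.map_eq_map_half_add h1 hhalf hz0 hz1
  rw [← hu] at e1
  have e2 := hh.rpow_half_mul_map hhalf hz0 hz1
  rw [← hh.map_one_sub h1 (x := 1 / (2 - z)) (by positivity) (by rw [div_lt_one h2z]; linarith),
    show 1 - 1 / (2 - z) = (1 - u) / 2 by rw [hu]; field_simp; ring] at e2
  have e3 := hh.map_eq_map_half_add h1 hhalf (v := 1 - u) (by linarith) (by linarith)
  rw [show (1 : ℝ) - (1 - u) / 2 = (1 + u) / 2 by ring, show (2 : ℝ) - (1 - u) = 1 + u by ring,
    show (1 - u) / (1 + u) = 1 - z by rw [hu]; field_simp; ring,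
    hh.map_one_sub h1 hz0 hz1, hh.map_one_sub h1 hu0 hu1] at e3
  have e4 : (1 - z / 2) ^ α * ((1 + u) / 2) ^ α = (1 / 2 : ℝ) ^ α := by
    rw [← mul_rpow (by linarith) (by positivity), hu]
    congr 1
    field_simp
    ring
  have hA : (2 * (1 / 2 : ℝ) ^ α - 1) * h z = 0 := by
    linear_combination e2 - (1 - z / 2) ^ α * e3 - e1 - h z * e4
  exact (mul_eq_zero.mp hA).resolve_left (two_mul_rpow_half_sub_one_ne_zero hα)

lemma exists_eq_rpow (hα0 : α ≠ 0) (hα1 : α ≠ 1) (hh : SolvesFundEq α h) :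
    ∃ a b : ℝ, (∀ x ∈ Ioo (0 : ℝ) 1, h x = a * x ^ α + b * (1 - x) ^ α - b) ∧ h 1 = a - b := by
  obtain ⟨b, hb⟩ : ∃ b : ℝ, b * (2 * (1 / 2 : ℝ) ^ α - 1) = h (1 / 2) - (1 / 2 : ℝ) ^ α * h 1 :=
    ⟨_, div_mul_cancel₀ _ (two_mul_rpow_half_sub_one_ne_zero hα1)⟩
  refine ⟨b + h 1, b, fun x ⟨hx0, hx1⟩ => ?_, by ring⟩
  have hzero := (hh.sub (solvesFundEq_rpow α (b + h 1) b)).eq_zero_of_map_one_of_map_half hα1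
    ?_ ?_ hx0 hx1
  · linarith
  · simp [zero_rpow hα0]
  · rw [show (1 : ℝ) - 1 / 2 = 1 / 2 by norm_num]
    linear_combination -hb

end SolvesFundEq

theorem stmt_17 (α ε : ℝ) (hα : α < 0) (hε : 0 ≤ ε) (f : ℝ → ℝ)
    (hf : ∀ x y : ℝ, 0 ≤ x → x < 1 → 0 ≤ y → y < 1 → x + y ≤ 1 →
      |f x + (1 - x) ^ α * f (y / (1 - x)) - f y - (1 - y) ^ α * f (x / (1 - y))| ≤ ε) :
    f 0 = 0 ∧ ∃ a b : ℝ,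
      (∀ x : ℝ, x ∈ Set.Ioo (0 : ℝ) 1 →
        |f x - (a * x ^ α + b * (1 - x) ^ α - b)| ≤
          (8 + 6 * 2 ^ α + 2 ^ (-α)) / (2 ^ (1 - α) - 1) * ε) ∧
      f 1 = a - b ∧
      (∀ x : ℝ, x ∈ Set.Icc (0 : ℝ) 1 →
        |f x - (if x = 0 then 0 else if x = 1 then a - b else
          a * x ^ α + b * (1 - x) ^ α - b)| ≤
          (8 + 6 * 2 ^ α + 2 ^ (-α)) / (2 ^ (1 - α) - 1) * ε) := by
  have hK : 0 ≤ (8 + 6 * 2 ^ α + 2 ^ (-α)) / (2 ^ (1 - α) - 1) * ε := by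
    have hden : 1 < (2 : ℝ) ^ (1 - α) := one_lt_rpow (by norm_num) (by linarith)
    have hnum : (0 : ℝ) < 8 + 6 * 2 ^ α + 2 ^ (-α) := by positivity
    exact mul_nonneg (div_nonneg hnum.le (by linarith)) hε
  have hf0 : f 0 = 0 := map_zero_of_approxSolvesFundEq hf hα
  obtain ⟨a, b, hfab, hf1⟩ :=
    (ApproxSolvesFundEq.solvesFundEq hf hα).exists_eq_rpow hα.ne (by linarith)
  refine ⟨hf0, a, b, fun x hx => ?_, hf1, fun x ⟨hx0, hx1⟩ => ?_⟩
  · rwa [hfab x hx, sub_self, abs_zero]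
  · suffices f x = if x = 0 then 0 else if x = 1 then a - b else
        a * x ^ α + b * (1 - x) ^ α - b by
      rwa [← this, sub_self, abs_zero]
    split_ifs with h0 h1
    · rw [h0, hf0]
    · rw [h1, hf1]
    · exact hfab x ⟨lt_of_le_of_ne hx0 (Ne.symm h0), lt_of_le_of_ne hx1 h1⟩
end

section
/- Let α ≠ 1 and let (Iₙ), Iₙ : Γ°ₙ → ℝ, be a sequence of functions satisfying the α-recursivity inequality |Iₙ(p₁,...,pₙ) - Iₙ₋₁(p₁+p₂, p₃,...,pₙ) - (p₁+p₂)^α I₂(p₁/(p₁+p₂), p₂/(p₁+p₂))| ≤ ε_{n-1} for n ≥ 3 and the 3-semi-symmetry inequality |I₃(p₁,p₂,p₃) - I₃(p₁,p₃,p₂)| ≤ ε₁ on Γ°₃. Then the function f(x) = I₂(1-x, x) satisfies |f(x) + (1-x)^α f(y/(1-x)) - f(y) - (1-y)^α f(x/(1-y))| ≤ 2ε₂ + ε₁ for all (x,y) with x, y, x+y ∈ (0,1). -/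
lemma triple_pos_and_sum_eq_one {x y : ℝ} (hx : 0 < x) (hy : 0 < y) (hxy : x + y < 1) :
    (∀ i, 0 < (![1 - x - y, y, x] : Fin 3 → ℝ) i) ∧
      (∑ i, (![1 - x - y, y, x] : Fin 3 → ℝ) i) = 1 := by
  refine ⟨fun i => ?_, by simp [Fin.sum_univ_three]⟩
  fin_cases i
  exacts [by simp only [Fin.zero_eta, Matrix.cons_val_zero]; linarith, hy, hx]

/-- One recursivity step on `(1 - x - y, y, x)`: merging the first two masses leaves `(1 - x, x)`,
and the merged pair has relative weights `(1 - y / (1 - x), y / (1 - x))`. -/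
lemma abs_three_sub_recursion_le {α δ : ℝ} {I₂ : (Fin 2 → ℝ) → ℝ} {I₃ : (Fin 3 → ℝ) → ℝ}
    {f : ℝ → ℝ}
    (hrec : ∀ p : Fin 3 → ℝ, (∀ i, 0 < p i) → (∑ i, p i) = 1 →
      |I₃ p - I₂ (Fin.cons (p 0 + p 1) (fun i : Fin 1 => p i.succ.succ)) -
        (p 0 + p 1) ^ α * I₂ ![p 0 / (p 0 + p 1), p 1 / (p 0 + p 1)]| ≤ δ)
    (hf : ∀ x ∈ Set.Ioo (0 : ℝ) 1, f x = I₂ ![1 - x, x])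
    {x y : ℝ} (hx : 0 < x) (hy : 0 < y) (hxy : x + y < 1) :
    |I₃ ![1 - x - y, y, x] - f x - (1 - x) ^ α * f (y / (1 - x))| ≤ δ := by
  have h1x : 0 < 1 - x := by linarith
  have hmerge : (Fin.cons (1 - x - y + y)
      (fun i : Fin 1 => (![1 - x - y, y, x] : Fin 3 → ℝ) i.succ.succ) : Fin 2 → ℝ) =
      ![1 - x, x] := by
    ext i
    fin_cases i
    · simp
    · rfl
  have hrel : (1 - x - y) / (1 - x) = 1 - y / (1 - x) := by
    rw [sub_div, div_self h1x.ne']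
  have hyx : y / (1 - x) ∈ Set.Ioo (0 : ℝ) 1 :=
    ⟨by positivity, (div_lt_one h1x).2 (by linarith)⟩
  obtain ⟨hpos, hsum⟩ := triple_pos_and_sum_eq_one hx hy hxy
  have h := hrec _ hpos hsum
  simp only [Matrix.cons_val_zero, Matrix.cons_val_one] at h
  rwa [hmerge, sub_add_cancel, hrel, ← hf x ⟨hx, by linarith⟩, ← hf _ hyx] at h

theorem stmt_19_general (α : ℝ) (ε : ℕ → ℝ)
    (I : (n : ℕ) → (Fin n → ℝ) → ℝ)
    (hrec : ∀ m : ℕ, 1 ≤ m → ∀ p : Fin (m + 2) → ℝ,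
      (∀ i, 0 < p i) → (∑ i, p i) = 1 →
      |I (m + 2) p -
        I (m + 1) (Fin.cons (p 0 + p 1) (fun i : Fin m => p i.succ.succ)) -
        (p 0 + p 1) ^ α * I 2 ![p 0 / (p 0 + p 1), p 1 / (p 0 + p 1)]| ≤ ε (m + 1))
    (hsym : ∀ p : Fin 3 → ℝ, (∀ i, 0 < p i) → (∑ i, p i) = 1 →
      |I 3 p - I 3 ![p 0, p 2, p 1]| ≤ ε 1)
    (f : ℝ → ℝ) (hf : ∀ x : ℝ, x ∈ Set.Ioo (0 : ℝ) 1 → f x = I 2 ![1 - x, x]) :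
    ∀ x y : ℝ, 0 < x → 0 < y → x + y < 1 →
      |f x + (1 - x) ^ α * f (y / (1 - x)) - f y - (1 - y) ^ α * f (x / (1 - y))| ≤
        2 * ε 2 + ε 1 := by
  intro x y hx hy hxy
  -- Both sides of the cocycle equation approximate `I₃` at the two orderings of one point.
  have hxI : |I 3 ![1 - x - y, y, x] - f x - (1 - x) ^ α * f (y / (1 - x))| ≤ ε 2 :=
    abs_three_sub_recursion_le (hrec 1 le_rfl) hf hx hy hxy
  have hyI : |I 3 ![1 - x - y, x, y] - f y - (1 - y) ^ α * f (x / (1 - y))| ≤ ε 2 := by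
    have h := abs_three_sub_recursion_le (hrec 1 le_rfl) hf hy hx (by linarith)
    rwa [sub_right_comm 1 y x] at h
  obtain ⟨hpos, hsum⟩ := triple_pos_and_sum_eq_one hx hy hxy
  have hswap : |I 3 ![1 - x - y, y, x] - I 3 ![1 - x - y, x, y]| ≤ ε 1 := hsym _ hpos hsum
  calc _ = |-(I 3 ![1 - x - y, y, x] - f x - (1 - x) ^ α * f (y / (1 - x))) +
          (I 3 ![1 - x - y, y, x] - I 3 ![1 - x - y, x, y]) +
          (I 3 ![1 - x - y, x, y] - f y - (1 - y) ^ α * f (x / (1 - y)))| := by congr 1; ring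
    _ ≤ _ := by
      refine (abs_add_three _ _ _).trans ?_
      rw [abs_neg]
      linarith

theorem stmt_19 (α : ℝ) (hα : α ≠ 1) (ε : ℕ → ℝ) (hε : ∀ n, 0 ≤ ε n)
    (I : (n : ℕ) → (Fin n → ℝ) → ℝ)
    (hrec : ∀ m : ℕ, 1 ≤ m → ∀ p : Fin (m + 2) → ℝ,
      (∀ i, 0 < p i) → (∑ i, p i) = 1 →
      |I (m + 2) p -
        I (m + 1) (Fin.cons (p 0 + p 1) (fun i : Fin m => p i.succ.succ)) -
        (p 0 + p 1) ^ α * I 2 ![p 0 / (p 0 + p 1), p 1 / (p 0 + p 1)]| ≤ ε (m + 1))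
    (hsym : ∀ p : Fin 3 → ℝ, (∀ i, 0 < p i) → (∑ i, p i) = 1 →
      |I 3 p - I 3 ![p 0, p 2, p 1]| ≤ ε 1)
    (f : ℝ → ℝ) (hf : ∀ x : ℝ, x ∈ Set.Ioo (0 : ℝ) 1 → f x = I 2 ![1 - x, x]) :
    ∀ x y : ℝ, 0 < x → 0 < y → x + y < 1 →
      |f x + (1 - x) ^ α * f (y / (1 - x)) - f y - (1 - y) ^ α * f (x / (1 - y))| ≤
        2 * ε 2 + ε 1 :=
  stmt_19_general α ε I hrec hsym f hf
end
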